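/- arXiv:1504.01076 — 8 statements merged into one kernel-verified Lean document; each statement's English description precedes it below -/
import Mathlib

section
/- Let m ≤ n be positive integers and let A be a real m × n matrix with orthonormal rows (A·Aᵀ = I_m). Let b be a positive integer and let A' be any real m × n matrix with |A_{ij} − A'_{ij}| ≤ 2^{−b} for all i, j. Then for every v ∈ ℝⁿ there exists s ∈ ℝⁿ with A'·v = A·(v − s) and ‖s‖₁ ≤ n²·2^{−b}·‖v‖₁. -/
/-- Rounding lemma: if `A` has orthonormal rows and `A'` agrees with `A` up to `2^{-b}`
entrywise, then for every `v` there is `s` with `A' v = A (v - s)` and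
`‖s‖₁ ≤ n² 2^{-b} ‖v‖₁`. -/
theorem stmt_2 (m n : ℕ) (hm : 1 ≤ m) (hmn : m ≤ n)
    (A A' : Matrix (Fin m) (Fin n) ℝ)
    (hA : A * A.transpose = 1)
    (b : ℕ) (hb : 1 ≤ b)
    (hA' : ∀ i j, |A i j - A' i j| ≤ ((2 : ℝ) ^ b)⁻¹) :
    ∀ v : Fin n → ℝ, ∃ s : Fin n → ℝ,
      A'.mulVec v = A.mulVec (v - s) ∧
      ∑ i, |s i| ≤ (n : ℝ) ^ 2 * ((2 : ℝ) ^ b)⁻¹ * ∑ i, |v i| := by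
  intro v
  set ε : ℝ := ((2 : ℝ) ^ b)⁻¹ with hε
  have hεpos : 0 ≤ ε := by positivity
  set w : Fin m → ℝ := (A - A').mulVec v with hw
  refine ⟨A.transpose.mulVec w, ?_, ?_⟩
  · have h1 : A.mulVec (A.transpose.mulVec w) = w := by
      rw [Matrix.mulVec_mulVec, hA, Matrix.one_mulVec]
    have : A.mulVec (v - A.transpose.mulVec w) =
        A.mulVec v - A.mulVec (A.transpose.mulVec w) := by
      rw [Matrix.mulVec_sub]
    rw [this, h1, hw, Matrix.sub_mulVec]
    ring_nf
  · -- entry bound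
    have hentry : ∀ i j, |A i j| ≤ 1 := by
      intro i j
      have hii : ∑ k, A i k * A i k = 1 := by
        have := congrFun (congrFun hA i) i
        simpa [Matrix.mul_apply, Matrix.one_apply, Matrix.transpose_apply] using this
      have hle : A i j * A i j ≤ 1 := by
        rw [← hii]
        exact Finset.single_le_sum (f := fun k => A i k * A i k) (fun k _ => mul_self_nonneg _) (Finset.mem_univ j)
      nlinarith [abs_nonneg (A i j), abs_mul_abs_self (A i j)]
    have hwbound : ∀ i, |w i| ≤ ε * ∑ k, |v k| := by
      intro i
      calc |w i| = |∑ k, (A i k - A' i k) * v k| := by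
            simp [hw, Matrix.mulVec, dotProduct, Matrix.sub_apply]
        _ ≤ ∑ k, |(A i k - A' i k) * v k| := Finset.abs_sum_le_sum_abs _ _
        _ ≤ ∑ k, ε * |v k| := by
            refine Finset.sum_le_sum fun k _ => ?_
            rw [abs_mul]
            exact mul_le_mul_of_nonneg_right (hA' i k) (abs_nonneg _)
        _ = ε * ∑ k, |v k| := by rw [Finset.mul_sum]
    have hsv : 0 ≤ ∑ k, |v k| := Finset.sum_nonneg fun k _ => abs_nonneg _
    calc ∑ j, |A.transpose.mulVec w j|
        ≤ ∑ j : Fin n, ∑ i : Fin m, |A i j| * |w i| := by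
          refine Finset.sum_le_sum fun j _ => ?_
          calc |A.transpose.mulVec w j| = |∑ i, A i j * w i| := by
                simp [Matrix.mulVec, dotProduct, Matrix.transpose_apply]
            _ ≤ ∑ i, |A i j * w i| := Finset.abs_sum_le_sum_abs _ _
            _ = ∑ i, |A i j| * |w i| := by simp [abs_mul]
      _ ≤ ∑ j : Fin n, ∑ i : Fin m, ε * ∑ k, |v k| := by
          refine Finset.sum_le_sum fun j _ => Finset.sum_le_sum fun i _ => ?_
          calc |A i j| * |w i| ≤ 1 * |w i| :=
                mul_le_mul_of_nonneg_right (hentry i j) (abs_nonneg _)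
            _ = |w i| := one_mul _
            _ ≤ ε * ∑ k, |v k| := hwbound i
      _ = (n : ℝ) * ((m : ℝ) * (ε * ∑ k, |v k|)) := by
          simp [Finset.sum_const, Finset.card_univ, mul_assoc]
      _ ≤ (n : ℝ) ^ 2 * ε * ∑ k, |v k| := by
          have hmn' : (m : ℝ) ≤ (n : ℝ) := by exact_mod_cast hmn
          have hn0 : (0 : ℝ) ≤ n := Nat.cast_nonneg n
          have h1 : (m : ℝ) * (ε * ∑ k, |v k|) ≤ (n : ℝ) * (ε * ∑ k, |v k|) :=
            mul_le_mul_of_nonneg_right hmn' (mul_nonneg hεpos hsv)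
          calc (n : ℝ) * ((m : ℝ) * (ε * ∑ k, |v k|))
              ≤ (n : ℝ) * ((n : ℝ) * (ε * ∑ k, |v k|)) :=
                mul_le_mul_of_nonneg_left h1 hn0
            _ = (n : ℝ) ^ 2 * ε * ∑ k, |v k| := by ring
end

section
/- Let Δ be a positive integer and let y, y' : {0, 1, …, Δ−1} → ℝ≥0 satisfy Σ_i y(i) = Σ_i y'(i) = 1. Then EMD(y, y') = Σ_{i=0}^{Δ−1} |CDF(y)_i − CDF(y')_i|, where CDF(y)_i := Σ_{j ≤ i} y(j). In particular, the infimum in the definition of EMD is attained and equals the ℓ₁ distance between the cumulative distribution functions. -/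
open Finset

namespace Stmt3Aux

/-- `y` extended to `ℕ` by zero. -/
noncomputable def ext (Δ : ℕ) (y : Fin Δ → ℝ) : ℕ → ℝ :=
  fun n => if h : n < Δ then y ⟨n, h⟩ else 0

/-- The CDF: sum of the first `n` values. -/
noncomputable def cdf (Δ : ℕ) (y : Fin Δ → ℝ) (n : ℕ) : ℝ :=
  ∑ k ∈ Finset.range n, ext Δ y k

/-- The monotone (quantile) coupling. -/
noncomputable def pi (Δ : ℕ) (y y' : Fin Δ → ℝ) : Fin Δ → Fin Δ → ℝ := fun i j =>
  max 0 (min (cdf Δ y (i+1)) (cdf Δ y' (j+1)) - max (cdf Δ y i) (cdf Δ y' j))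

lemma ext_nonneg (Δ : ℕ) (y : Fin Δ → ℝ) (hy : ∀ i, 0 ≤ y i) (n : ℕ) :
    0 ≤ ext Δ y n := by
  unfold ext; split <;> simp [hy]

lemma cdf_mono (Δ : ℕ) (y : Fin Δ → ℝ) (hy : ∀ i, 0 ≤ y i) {m n : ℕ} (h : m ≤ n) :
    cdf Δ y m ≤ cdf Δ y n :=
  Finset.sum_le_sum_of_subset_of_nonneg (Finset.range_subset_range.2 h)
    (fun k _ _ => ext_nonneg Δ y hy k)

lemma cdf_nonneg (Δ : ℕ) (y : Fin Δ → ℝ) (hy : ∀ i, 0 ≤ y i) (n : ℕ) :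
    0 ≤ cdf Δ y n :=
  Finset.sum_nonneg fun k _ => ext_nonneg Δ y hy k

lemma sum_ext (Δ : ℕ) (y : Fin Δ → ℝ) : cdf Δ y Δ = ∑ i, y i := by
  rw [cdf, ← Fin.sum_univ_eq_sum_range]
  exact Finset.sum_congr rfl fun i _ => by simp [ext, i.isLt]

lemma cdf_top (Δ : ℕ) (y : Fin Δ → ℝ) (hs : ∑ i, y i = 1) {n : ℕ} (h : Δ ≤ n) :
    cdf Δ y n = 1 := by
  rw [cdf, ← Finset.sum_subset (Finset.range_subset_range.2 h)
    (fun k _ hk => by simp only [Finset.mem_range, not_lt] at hk; simp [ext, Nat.not_lt.2 hk])]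
  rw [← cdf, sum_ext, hs]

lemma cdf_le_one (Δ : ℕ) (y : Fin Δ → ℝ) (hy : ∀ i, 0 ≤ y i) (hs : ∑ i, y i = 1)
    (n : ℕ) : cdf Δ y n ≤ 1 := by
  rcases le_total n Δ with h | h
  · calc cdf Δ y n ≤ cdf Δ y Δ := cdf_mono Δ y hy h
      _ = 1 := by rw [sum_ext, hs]
  · rw [cdf_top Δ y hs h]

lemma cdf_eq_ind (Δ : ℕ) (y : Fin Δ → ℝ) (n : ℕ) (hn : n ≤ Δ) :
    cdf Δ y n = ∑ j : Fin Δ, (if (j : ℕ) < n then (1:ℝ) else 0) * y j := by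
  have h1 : ∑ j : Fin Δ, (if (j:ℕ) < n then (1:ℝ) else 0) * y j
      = ∑ k ∈ range Δ, (if k < n then (1:ℝ) else 0) * ext Δ y k := by
    rw [← Fin.sum_univ_eq_sum_range (fun k => (if k < n then (1:ℝ) else 0) * ext Δ y k) Δ]
    exact Finset.sum_congr rfl fun j _ => by simp [ext, j.isLt]
  have h2 : Finset.filter (fun k => k < n) (range Δ) = range n := by
    ext k; simp; omega
  rw [h1, cdf]
  rw [show (∑ k ∈ range Δ, (if k < n then (1:ℝ) else 0) * ext Δ y k)
      = ∑ k ∈ range Δ, (if k < n then ext Δ y k else 0) from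
    Finset.sum_congr rfl fun k _ => by split <;> simp]
  rw [← Finset.sum_filter, h2]

lemma cdf_eq_filter (Δ : ℕ) (y : Fin Δ → ℝ) (i : Fin Δ) :
    (∑ j ∈ Finset.univ.filter fun j => j ≤ i, y j) = cdf Δ y (i + 1) := by
  rw [cdf_eq_ind Δ y (i+1) i.isLt, Finset.sum_filter]
  refine Finset.sum_congr rfl fun j _ => ?_
  simp only [Fin.le_def]
  by_cases h : (j:ℕ) ≤ (i:ℕ)
  · rw [if_pos h, if_pos (by omega), one_mul]
  · rw [if_neg h, if_neg (by omega), zero_mul]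

lemma clamp_eq (a b u v : ℝ) (hab : a ≤ b) (huv : u ≤ v) :
    max 0 (min b v - max a u) = min b (max a v) - min b (max a u) := by
  simp only [max_def, min_def]
  split_ifs <;> linarith

lemma pi_nonneg (Δ : ℕ) (y y' : Fin Δ → ℝ) (i j : Fin Δ) : 0 ≤ pi Δ y y' i j :=
  le_max_left _ _

lemma pi_symm (Δ : ℕ) (y y' : Fin Δ → ℝ) (i j : Fin Δ) :
    pi Δ y y' i j = pi Δ y' y j i := by
  unfold pi
  rw [min_comm, max_comm (cdf Δ y (i:ℕ)) (cdf Δ y' (j:ℕ))]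

lemma pi_row (Δ : ℕ) (y y' : Fin Δ → ℝ) (hy : ∀ i, 0 ≤ y i) (hy' : ∀ i, 0 ≤ y' i)
    (hsy : ∑ i, y i = 1) (hsy' : ∑ i, y' i = 1) (i : Fin Δ) :
    ∑ j, pi Δ y y' i j = y i := by
  set a := cdf Δ y i with ha
  set b := cdf Δ y ((i:ℕ)+1) with hb
  have hab : a ≤ b := cdf_mono Δ y hy (Nat.le_succ _)
  have ha0 : 0 ≤ a := cdf_nonneg Δ y hy _
  have hb1 : b ≤ 1 := cdf_le_one Δ y hy hsy _
  set f : ℕ → ℝ := fun n => min b (max a (cdf Δ y' n)) with hf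
  have h1 : ∑ j, pi Δ y y' i j
      = ∑ n ∈ range Δ, max 0 (min b (cdf Δ y' (n+1)) - max a (cdf Δ y' n)) := by
    rw [← Fin.sum_univ_eq_sum_range
      (fun n => max 0 (min b (cdf Δ y' (n+1)) - max a (cdf Δ y' n))) Δ]
    exact Finset.sum_congr rfl fun j _ => rfl
  rw [h1]
  have h2 : ∀ n ∈ range Δ,
      max 0 (min b (cdf Δ y' (n+1)) - max a (cdf Δ y' n)) = f (n+1) - f n := by
    intro n _
    exact clamp_eq a b (cdf Δ y' n) (cdf Δ y' (n+1)) hab (cdf_mono Δ y' hy' (Nat.le_succ _))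
  rw [Finset.sum_congr rfl h2, Finset.sum_range_sub f Δ]
  have hfΔ : f Δ = b := by
    rw [hf]; simp only [cdf_top Δ y' hsy' (le_refl Δ)]
    rw [max_eq_right (le_trans hab hb1), min_eq_left hb1]
  have hf0 : f 0 = a := by
    rw [hf]; simp only [cdf]
    rw [Finset.range_zero, Finset.sum_empty, max_eq_left ha0, min_eq_right hab]
  rw [hfΔ, hf0, hb, ha]
  have hs := Finset.sum_range_succ (ext Δ y) (i:ℕ)
  rw [cdf, cdf, hs]
  simp [ext, i.isLt]

lemma pi_col (Δ : ℕ) (y y' : Fin Δ → ℝ) (hy : ∀ i, 0 ≤ y i) (hy' : ∀ i, 0 ≤ y' i)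
    (hsy : ∑ i, y i = 1) (hsy' : ∑ i, y' i = 1) (j : Fin Δ) :
    ∑ i, pi Δ y y' i j = y' j := by
  rw [Finset.sum_congr rfl fun i _ => pi_symm Δ y y' i j]
  exact pi_row Δ y' y hy' hy hsy' hsy j

lemma sum_ind (a n : ℕ) :
    ∑ k ∈ range n, (if a ≤ k then (1:ℝ) else 0) = ((n - a : ℕ) : ℝ) := by
  induction n with
  | zero => simp
  | succ n ih =>
    rw [Finset.sum_range_succ, ih]
    by_cases h : a ≤ n
    · rw [if_pos h]
      have : n + 1 - a = (n - a) + 1 := by omega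
      rw [this]; push_cast; ring
    · rw [if_neg h]
      have h1 : n - a = 0 := by omega
      have h2 : n + 1 - a = 0 := by omega
      rw [h1, h2]; norm_num

lemma abs_ind (i j k : ℕ) :
    |(if j ≤ k then (1:ℝ) else 0) - (if i ≤ k then 1 else 0)|
    = (if min i j ≤ k then (1:ℝ) else 0) - (if max i j ≤ k then 1 else 0) := by
  simp only [Nat.min_def, Nat.max_def]
  split_ifs <;> first | omega | norm_num

lemma abs_dist (Δ i j : ℕ) (hi : i < Δ) (hj : j < Δ) :
    |(i:ℝ) - (j:ℝ)|
    = ∑ k ∈ range Δ, |(if j ≤ k then (1:ℝ) else 0) - (if i ≤ k then 1 else 0)| := by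
  rw [Finset.sum_congr rfl fun k _ => abs_ind i j k, Finset.sum_sub_distrib,
    sum_ind, sum_ind, Nat.cast_sub (by omega : min i j ≤ Δ),
    Nat.cast_sub (by omega : max i j ≤ Δ)]
  rcases le_total i j with h | h
  · rw [min_eq_left h, max_eq_right h, abs_of_nonpos (by simp [Nat.cast_le.2 h])]
    ring
  · rw [min_eq_right h, max_eq_left h, abs_of_nonneg (by simp [Nat.cast_le.2 h])]
    ring

lemma marg (Δ : ℕ) (y y' : Fin Δ → ℝ) (π : Fin Δ → Fin Δ → ℝ)
    (hrow : ∀ i, ∑ j, π i j = y i) (hcol : ∀ j, ∑ i, π i j = y' j)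
    (k : ℕ) (hk : k < Δ) :
    ∑ i, ∑ j, π i j * ((if (j:ℕ) ≤ k then (1:ℝ) else 0) - (if (i:ℕ) ≤ k then 1 else 0))
      = cdf Δ y' (k+1) - cdf Δ y (k+1) := by
  simp only [mul_sub, Finset.sum_sub_distrib]
  have h1 : ∑ i, ∑ j, π i j * (if (j:ℕ) ≤ k then (1:ℝ) else 0)
      = cdf Δ y' (k+1) := by
    rw [Finset.sum_comm, cdf_eq_ind Δ y' (k+1) hk]
    refine Finset.sum_congr rfl fun j _ => ?_
    rw [← Finset.sum_mul, hcol j, mul_comm]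
    congr 1
    simp [Nat.lt_succ_iff]
  have h2 : ∑ i, ∑ j, π i j * (if (i:ℕ) ≤ k then (1:ℝ) else 0)
      = cdf Δ y (k+1) := by
    rw [cdf_eq_ind Δ y (k+1) hk]
    refine Finset.sum_congr rfl fun i _ => ?_
    rw [← Finset.sum_mul, hrow i, mul_comm]
    congr 1
    simp [Nat.lt_succ_iff]
  rw [h1, h2]

/-- Generic cost expansion: any coupling's cost is the sum over levels `k` of the
masses moved across level `k`. -/
lemma cost_expand (Δ : ℕ) (π : Fin Δ → Fin Δ → ℝ) :
    ∑ i, ∑ j, π i j * |((i : ℕ) : ℝ) - ((j : ℕ) : ℝ)|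
    = ∑ k ∈ range Δ, ∑ i : Fin Δ, ∑ j : Fin Δ,
        π i j * |(if (j:ℕ) ≤ k then (1:ℝ) else 0) - (if (i:ℕ) ≤ k then 1 else 0)| := by
  have h : ∀ i j : Fin Δ, π i j * |((i : ℕ) : ℝ) - ((j : ℕ) : ℝ)|
      = ∑ k ∈ range Δ,
          π i j * |(if (j:ℕ) ≤ k then (1:ℝ) else 0) - (if (i:ℕ) ≤ k then 1 else 0)| := by
    intro i j
    rw [abs_dist Δ i j i.isLt j.isLt, Finset.mul_sum]
  calc ∑ i, ∑ j, π i j * |((i : ℕ) : ℝ) - ((j : ℕ) : ℝ)|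
      = ∑ i : Fin Δ, ∑ j : Fin Δ, ∑ k ∈ range Δ,
          π i j * |(if (j:ℕ) ≤ k then (1:ℝ) else 0) - (if (i:ℕ) ≤ k then 1 else 0)| :=
        Finset.sum_congr rfl fun i _ => Finset.sum_congr rfl fun j _ => h i j
    _ = ∑ i : Fin Δ, ∑ k ∈ range Δ, ∑ j : Fin Δ,
          π i j * |(if (j:ℕ) ≤ k then (1:ℝ) else 0) - (if (i:ℕ) ≤ k then 1 else 0)| :=
        Finset.sum_congr rfl fun i _ => Finset.sum_comm
    _ = ∑ k ∈ range Δ, ∑ i : Fin Δ, ∑ j : Fin Δ,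
          π i j * |(if (j:ℕ) ≤ k then (1:ℝ) else 0) - (if (i:ℕ) ≤ k then 1 else 0)| :=
        Finset.sum_comm

/-- The per-level cost of the monotone coupling equals the CDF gap. -/
lemma perk (Δ : ℕ) (y y' : Fin Δ → ℝ) (hy : ∀ i, 0 ≤ y i) (hy' : ∀ i, 0 ≤ y' i)
    (hsy : ∑ i, y i = 1) (hsy' : ∑ i, y' i = 1) (k : ℕ) (hk : k < Δ) :
    ∑ i : Fin Δ, ∑ j : Fin Δ,
        pi Δ y y' i j * |(if (j:ℕ) ≤ k then (1:ℝ) else 0) - (if (i:ℕ) ≤ k then 1 else 0)|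
      = |cdf Δ y (k+1) - cdf Δ y' (k+1)| := by
  have hmarg := marg Δ y y' (pi Δ y y')
    (pi_row Δ y y' hy hy' hsy hsy') (pi_col Δ y y' hy hy' hsy hsy') k hk
  rcases le_total (cdf Δ y (k+1)) (cdf Δ y' (k+1)) with hc | hc
  · -- F ≤ G : no mass moves left across k
    have hptwise : ∀ i j : Fin Δ,
        pi Δ y y' i j * |(if (j:ℕ) ≤ k then (1:ℝ) else 0) - (if (i:ℕ) ≤ k then 1 else 0)|
        = pi Δ y y' i j * ((if (j:ℕ) ≤ k then (1:ℝ) else 0) - (if (i:ℕ) ≤ k then 1 else 0)) := by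
      intro i j
      by_cases hi : (i:ℕ) ≤ k
      · by_cases hj : (j:ℕ) ≤ k
        · rw [if_pos hi, if_pos hj]; norm_num
        · -- i ≤ k < j : pi = 0
          have hpi0 : pi Δ y y' i j = 0 := by
            unfold pi
            rw [max_eq_left]
            have e1 : cdf Δ y ((i:ℕ)+1) ≤ cdf Δ y (k+1) := cdf_mono Δ y hy (by omega)
            have e2 : cdf Δ y' (k+1) ≤ cdf Δ y' (j:ℕ) := cdf_mono Δ y' hy' (by omega)
            have : min (cdf Δ y ((i:ℕ)+1)) (cdf Δ y' ((j:ℕ)+1)) ≤ cdf Δ y ((i:ℕ)+1) :=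
              min_le_left _ _
            have : max (cdf Δ y (i:ℕ)) (cdf Δ y' (j:ℕ)) ≥ cdf Δ y' (j:ℕ) :=
              le_max_right _ _
            linarith [min_le_left (cdf Δ y ((i:ℕ)+1)) (cdf Δ y' ((j:ℕ)+1)),
              le_max_right (cdf Δ y (i:ℕ)) (cdf Δ y' (j:ℕ))]
          rw [hpi0]; ring
      · by_cases hj : (j:ℕ) ≤ k
        · rw [if_neg hi, if_pos hj]; norm_num
        · rw [if_neg hi, if_neg hj]; norm_num
    rw [Finset.sum_congr rfl fun i _ => Finset.sum_congr rfl fun j _ => hptwise i j,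
      hmarg, abs_of_nonpos (by linarith)]
    ring
  · -- G ≤ F : symmetric
    have hptwise : ∀ i j : Fin Δ,
        pi Δ y y' i j * |(if (j:ℕ) ≤ k then (1:ℝ) else 0) - (if (i:ℕ) ≤ k then 1 else 0)|
        = pi Δ y y' i j * ((if (i:ℕ) ≤ k then (1:ℝ) else 0) - (if (j:ℕ) ≤ k then 1 else 0)) := by
      intro i j
      by_cases hi : (i:ℕ) ≤ k
      · by_cases hj : (j:ℕ) ≤ k
        · rw [if_pos hi, if_pos hj]; norm_num
        · rw [if_pos hi, if_neg hj]; norm_num [abs_sub_comm]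
      · by_cases hj : (j:ℕ) ≤ k
        · -- j ≤ k < i : pi = 0
          have hpi0 : pi Δ y y' i j = 0 := by
            unfold pi
            rw [max_eq_left]
            have e1 : cdf Δ y' ((j:ℕ)+1) ≤ cdf Δ y' (k+1) := cdf_mono Δ y' hy' (by omega)
            have e2 : cdf Δ y (k+1) ≤ cdf Δ y (i:ℕ) := cdf_mono Δ y hy (by omega)
            linarith [min_le_right (cdf Δ y ((i:ℕ)+1)) (cdf Δ y' ((j:ℕ)+1)),
              le_max_left (cdf Δ y (i:ℕ)) (cdf Δ y' (j:ℕ))]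
          rw [hpi0]; ring
        · rw [if_neg hi, if_neg hj]; norm_num
    have hneg : ∑ i : Fin Δ, ∑ j : Fin Δ,
        pi Δ y y' i j * ((if (i:ℕ) ≤ k then (1:ℝ) else 0) - (if (j:ℕ) ≤ k then 1 else 0))
        = -(cdf Δ y' (k+1) - cdf Δ y (k+1)) := by
      rw [← hmarg]
      simp only [← Finset.sum_neg_distrib]
      refine Finset.sum_congr rfl fun i _ => Finset.sum_congr rfl fun j _ => ?_
      ring
    rw [Finset.sum_congr rfl fun i _ => Finset.sum_congr rfl fun j _ => hptwise i j,
      hneg, abs_of_nonneg (by linarith)]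
    ring

end Stmt3Aux

open Stmt3Aux

/-- On the line `{0, …, Δ−1}`, the Earth Mover's Distance between two probability
distributions equals the `ℓ₁` distance between their CDFs; moreover the infimum in
the definition of EMD is attained (stated via `IsLeast` for the set of costs of
couplings). -/
theorem stmt_3 (Δ : ℕ) (hΔ : 0 < Δ) (y y' : Fin Δ → ℝ)
    (hy : ∀ i, 0 ≤ y i) (hy' : ∀ i, 0 ≤ y' i)
    (hsy : ∑ i, y i = 1) (hsy' : ∑ i, y' i = 1) :
    IsLeast
      {c : ℝ | ∃ π : Fin Δ → Fin Δ → ℝ,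
        (∀ i j, 0 ≤ π i j) ∧
        (∀ i, ∑ j, π i j = y i) ∧
        (∀ j, ∑ i, π i j = y' j) ∧
        c = ∑ i, ∑ j, π i j * |((i : ℕ) : ℝ) - ((j : ℕ) : ℝ)|}
      (∑ i, |(∑ j ∈ Finset.univ.filter fun j => j ≤ i, y j) -
             (∑ j ∈ Finset.univ.filter fun j => j ≤ i, y' j)|) := by
  have target_eq : (∑ i, |(∑ j ∈ Finset.univ.filter fun j => j ≤ i, y j) -
             (∑ j ∈ Finset.univ.filter fun j => j ≤ i, y' j)|)
      = ∑ k ∈ Finset.range Δ, |cdf Δ y (k+1) - cdf Δ y' (k+1)| := by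
    rw [← Fin.sum_univ_eq_sum_range (fun k => |cdf Δ y (k+1) - cdf Δ y' (k+1)|) Δ]
    exact Finset.sum_congr rfl fun i _ => by
      rw [cdf_eq_filter Δ y i, cdf_eq_filter Δ y' i]
  constructor
  · exact ⟨pi Δ y y', pi_nonneg Δ y y', pi_row Δ y y' hy hy' hsy hsy',
      pi_col Δ y y' hy hy' hsy hsy', by
        rw [cost_expand Δ (pi Δ y y'), target_eq]
        exact Finset.sum_congr rfl fun k hk =>
          (perk Δ y y' hy hy' hsy hsy' k (Finset.mem_range.1 hk)).symm⟩
  · rintro c ⟨π, hpos, hrow, hcol, rfl⟩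
    rw [target_eq, cost_expand Δ π]
    refine Finset.sum_le_sum fun k hk => ?_
    have hm := marg Δ y y' π hrow hcol k (Finset.mem_range.1 hk)
    calc |cdf Δ y (k+1) - cdf Δ y' (k+1)|
        = |∑ i, ∑ j, π i j *
            ((if (j:ℕ) ≤ k then (1:ℝ) else 0) - (if (i:ℕ) ≤ k then 1 else 0))| := by
          rw [hm, abs_sub_comm]
      _ ≤ ∑ i, |∑ j, π i j *
            ((if (j:ℕ) ≤ k then (1:ℝ) else 0) - (if (i:ℕ) ≤ k then 1 else 0))| :=
          Finset.abs_sum_le_sum_abs _ _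
      _ ≤ ∑ i, ∑ j, |π i j *
            ((if (j:ℕ) ≤ k then (1:ℝ) else 0) - (if (i:ℕ) ≤ k then 1 else 0))| :=
          Finset.sum_le_sum fun i _ => Finset.abs_sum_le_sum_abs _ _
      _ = ∑ i : Fin Δ, ∑ j : Fin Δ, π i j *
            |(if (j:ℕ) ≤ k then (1:ℝ) else 0) - (if (i:ℕ) ≤ k then 1 else 0)| :=
          Finset.sum_congr rfl fun i _ => Finset.sum_congr rfl fun j _ => by
            rw [abs_mul, abs_of_nonneg (hpos i j)]
end

section
/- For every C > 0 and every δ ∈ (0, 1) there exists a constant K = K(C, δ) > 0 with the following property. Let X₁, …, X_n be (not necessarily independent) nonnegative random variables on a common probability space such that P[X_i ≥ t] ≤ C/t for every i and every t > 0. Let α₁, …, α_n ≥ 0 with Σ_i α_i = 1, and set S = Σ_i α_i·X_i. Then P[S ≤ K·(1 + H(α))] ≥ 1 − δ, where H(α) := Σ_i α_i·log₂(1/α_i) is the entropy of the probability vector α (with the convention 0·log₂(1/0) = 0). In particular H(α) ≤ log₂ n. -/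
open MeasureTheory


lemma aux_dyadic (C : ℝ) (hC : 0 < C) : ∀ (m : ℕ) (x : ℝ), 0 ≤ x → x < C * 2 ^ m →
    x ≤ 2 * C + ∑ k ∈ Finset.range m, (if C * 2 ^ k ≤ x then C * 2 ^ k else 0) := by
  intro m
  induction m with
  | zero =>
    intro x hx0 hxm
    simp only [pow_zero, mul_one] at hxm
    simp only [Finset.range_zero, Finset.sum_empty]
    linarith
  | succ m ih =>
    intro x hx0 hxm
    rw [Finset.sum_range_succ]
    by_cases h : C * 2 ^ m ≤ x
    · have hfull : ∀ k ∈ Finset.range (m + 1),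
          (if C * 2 ^ k ≤ x then C * 2 ^ k else (0:ℝ)) = C * 2 ^ k := by
        intro k hk
        rw [if_pos]
        refine le_trans ?_ h
        have : (2:ℝ) ^ k ≤ 2 ^ m := by
          apply pow_le_pow_right₀ (by norm_num)
          have := Finset.mem_range.mp hk
          omega
        nlinarith
      have hsum : ∑ k ∈ Finset.range (m+1), (if C * 2 ^ k ≤ x then C * 2 ^ k else (0:ℝ))
          = C * (2 ^ (m+1) - 1) := by
        rw [Finset.sum_congr rfl hfull, ← Finset.mul_sum, geom_sum_eq (by norm_num)]
        ring
      rw [Finset.sum_range_succ] at hsum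
      have h2 : (0:ℝ) < 2 ^ (m+1) := by positivity
      nlinarith [hsum]
    · rw [if_neg h]
      have := ih x hx0 (not_le.mp h)
      linarith
  
lemma aux_logb_le (x : ℝ) (hx : 1 ≤ x) : Real.logb 2 x ≤ 2 * x := by
  have h2 : (0.6931471803:ℝ) < Real.log 2 := Real.log_two_gt_d9
  rw [Real.logb, div_le_iff₀ (by linarith)]
  nlinarith [Real.log_le_sub_one_of_pos (show (0:ℝ) < x by linarith)]

lemma aux_entropy (n : ℕ) (α : Fin n → ℝ) (h0 : ∀ i, 0 ≤ α i) (h1 : ∑ i, α i = 1) :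
    ∑ i, α i * Real.logb 2 (α i)⁻¹ ≤ Real.logb 2 n := by
  classical
  set s := Finset.univ.filter (fun i => α i ≠ 0) with hs
  have hsum : ∑ i ∈ s, α i = 1 := by
    rw [hs, Finset.sum_filter_ne_zero, h1]
  have hpos : ∀ i ∈ s, 0 < α i := by
    intro i hi
    rw [hs, Finset.mem_filter] at hi
    exact lt_of_le_of_ne (h0 i) (Ne.symm hi.2)
  have hjensen := (strictConcaveOn_log_Ioi.concaveOn).le_map_sum
    (t := s) (w := α) (p := fun i => (α i)⁻¹)
    (fun i hi => h0 i) hsum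
    (fun i hi => Set.mem_Ioi.mpr (inv_pos.mpr (hpos i hi)))
  have hcs : ∑ i ∈ s, α i • (α i)⁻¹ = (s.card : ℝ) := by
    rw [Finset.sum_congr rfl (fun i hi => ?_)]
    · rw [Finset.sum_const, nsmul_eq_mul, mul_one]
    · rw [smul_eq_mul, mul_inv_cancel₀ (hpos i hi).ne']
  rw [hcs] at hjensen
  have hne : s.Nonempty := by
    by_contra h
    rw [Finset.not_nonempty_iff_eq_empty] at h
    rw [h, Finset.sum_empty] at hsum
    norm_num at hsum
  have hcard : 0 < s.card := Finset.card_pos.mpr hne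
  have hcardn : s.card ≤ n := by
    calc s.card ≤ Finset.univ.card := Finset.card_le_univ s
    _ = n := by simp
  have hlogcard : Real.log s.card ≤ Real.log n := by
    apply Real.log_le_log (by exact_mod_cast hcard) (by exact_mod_cast hcardn)
  have hfilter : ∑ i, α i * Real.logb 2 (α i)⁻¹ = ∑ i ∈ s, α i * Real.logb 2 (α i)⁻¹ := by
    rw [hs]
    exact (Finset.sum_filter_of_ne (fun i _ hne => by
      intro h; apply hne; rw [h]; ring)).symm
  rw [hfilter]
  have hlog2 : (0:ℝ) < Real.log 2 := Real.log_pos one_lt_two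
  simp only [Real.logb, ← mul_div_assoc]
  rw [← Finset.sum_div, div_le_div_iff_of_pos_right hlog2]
  calc ∑ i ∈ s, α i * Real.log (α i)⁻¹ = ∑ i ∈ s, α i • Real.log (α i)⁻¹ := by
        simp [smul_eq_mul]
    _ ≤ Real.log s.card := hjensen
    _ ≤ Real.log n := hlogcard

/-- Tail bound for weighted sums of heavy-tailed nonnegative random variables:
if `P[Xᵢ ≥ t] ≤ C/t` for all `i, t > 0` and `α` is a probability vector, then with
probability at least `1 − δ` one has `∑ αᵢ Xᵢ ≤ K (1 + H(α))`, where
`H(α) = ∑ αᵢ log₂(1/αᵢ)`; in particular `H(α) ≤ log₂ n`. -/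
theorem stmt_4 (C : ℝ) (hC : 0 < C) (δ : ℝ) (hδ0 : 0 < δ) (hδ1 : δ < 1) :
    ∃ K : ℝ, 0 < K ∧
      ∀ (n : ℕ) (Ω : Type) (_ : MeasureSpace Ω),
        IsProbabilityMeasure (volume : Measure Ω) →
        ∀ X : Fin n → Ω → ℝ, (∀ i, Measurable (X i)) → (∀ i ω, 0 ≤ X i ω) →
        (∀ i, ∀ t : ℝ, 0 < t → (volume {ω | t ≤ X i ω}).toReal ≤ C / t) →
        ∀ α : Fin n → ℝ, (∀ i, 0 ≤ α i) → ∑ i, α i = 1 →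
        1 - δ ≤ (volume {ω | ∑ i, α i * X i ω ≤
            K * (1 + ∑ i, α i * Real.logb 2 (α i)⁻¹)}).toReal ∧
        ∑ i, α i * Real.logb 2 (α i)⁻¹ ≤ Real.logb 2 n := by
  classical
  obtain ⟨B, hBdef⟩ : ∃ B : ℝ, B = Real.logb 2 (2/δ) + 4 := ⟨_, rfl⟩
  have hLB : 0 ≤ Real.logb 2 (2/δ) := by
    apply Real.logb_nonneg one_lt_two
    rw [le_div_iff₀ hδ0]; linarith
  have hB4 : 4 ≤ B := by rw [hBdef]; linarith
  have hB0 : 0 < B := by linarith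
  refine ⟨2*C + (2/δ)*C*B, by positivity, ?_⟩
  intro n Ω _ hprob X hXm hX0 hTail α hα0 hα1
  refine ⟨?_, aux_entropy n α hα0 hα1⟩
  obtain ⟨H, hHdef⟩ : ∃ H : ℝ, H = ∑ i, α i * Real.logb 2 (α i)⁻¹ := ⟨_, rfl⟩
  rw [← hHdef]
  have hα1' : ∀ i, α i ≤ 1 := by
    intro i
    rw [← hα1]
    exact Finset.single_le_sum (fun j _ => hα0 j) (Finset.mem_univ i)
  have hlog0 : ∀ i, 0 ≤ Real.logb 2 (α i)⁻¹ := by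
    intro i
    by_cases h : α i = 0
    · simp [h]
    · apply Real.logb_nonneg one_lt_two
      rw [one_le_inv_iff₀]
      exact ⟨lt_of_le_of_ne (hα0 i) (Ne.symm h), hα1' i⟩
  have hH0 : 0 ≤ H := hHdef ▸ Finset.sum_nonneg fun i _ => mul_nonneg (hα0 i) (hlog0 i)
  obtain ⟨c, hcdef⟩ : ∃ c : Fin n → ℝ, c = fun i => 1 + Real.logb 2 (α i)⁻¹ := ⟨_, rfl⟩
  have hc1 : ∀ i, 1 ≤ c i := fun i => by rw [hcdef]; simp only; linarith [hlog0 i]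
  have hc0 : ∀ i, 0 < c i := fun i => lt_of_lt_of_le one_pos (hc1 i)
  have hsumc : ∑ i, α i * c i = 1 + H := by
    rw [hcdef, hHdef]
    simp only [mul_add, mul_one, Finset.sum_add_distrib, hα1]
  obtain ⟨t, htdef⟩ : ∃ t : Fin n → ℝ, t = fun i => (2*C/δ) * c i / α i := ⟨_, rfl⟩
  have htdef' : ∀ i, t i = (2*C/δ) * c i / α i := fun i => by rw [htdef]
  obtain ⟨m, hmdef⟩ : ∃ m : Fin n → ℕ, m = fun i => ⌈Real.logb 2 (t i / C)⌉₊ := ⟨_, rfl⟩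
  have hmdef' : ∀ i, m i = ⌈Real.logb 2 (t i / C)⌉₊ := fun i => by rw [hmdef]
  obtain ⟨A, hAdef⟩ : ∃ A : Fin n → Set Ω,
      A = fun i => if α i = 0 then (∅:Set Ω) else {ω | t i ≤ X i ω} := ⟨_, rfl⟩
  have hAdef' : ∀ i, A i = if α i = 0 then (∅:Set Ω) else {ω | t i ≤ X i ω} :=
    fun i => by rw [hAdef]
  obtain ⟨F, hFdef⟩ : ∃ F : Fin n → Ω → ℝ, F = fun i ω => ∑ k ∈ Finset.range (m i),
      Set.indicator {ω' | C*2^k ≤ X i ω'} (fun _ => C*2^k) ω := ⟨_, rfl⟩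
  have hFdef' : ∀ i ω, F i ω = ∑ k ∈ Finset.range (m i),
      Set.indicator {ω' | C*2^k ≤ X i ω'} (fun _ => C*2^k) ω := fun i ω => by rw [hFdef]
  obtain ⟨Z, hZdef⟩ : ∃ Z : Ω → ℝ, Z = fun ω => ∑ i, α i * F i ω := ⟨_, rfl⟩
  have hZdef' : ∀ ω, Z ω = ∑ i, α i * F i ω := fun ω => by rw [hZdef]
  -- basic positivity on the support
  have hti : ∀ i, α i ≠ 0 → 0 < t i := by
    intro i h
    have hai : 0 < α i := lt_of_le_of_ne (hα0 i) (Ne.symm h)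
    rw [htdef' i]
    exact div_pos (mul_pos (by positivity) (hc0 i)) hai
  have htiC : ∀ i, α i ≠ 0 → 1 ≤ t i / C := by
    intro i h
    have hai : 0 < α i := lt_of_le_of_ne (hα0 i) (Ne.symm h)
    have heq : t i / C = (2/δ) * (c i / α i) := by
      rw [htdef' i]; field_simp
    have h1 : 1 ≤ c i / α i := (one_le_div hai).mpr (le_trans (hα1' i) (hc1 i))
    have h2 : 1 ≤ 2/δ := by rw [le_div_iff₀ hδ0]; linarith
    rw [heq]; nlinarith
  have hlogt : ∀ i, α i ≠ 0 → 0 ≤ Real.logb 2 (t i / C) := by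
    intro i h
    exact Real.logb_nonneg one_lt_two (htiC i h)
  have htm : ∀ i, α i ≠ 0 → t i ≤ C * 2 ^ (m i) := by
    intro i h
    have h1 : t i / C = (2:ℝ) ^ (Real.logb 2 (t i / C)) :=
      (Real.rpow_logb two_pos (by norm_num) (div_pos (hti i h) hC)).symm
    have hle : Real.logb 2 (t i / C) ≤ ((m i : ℕ) : ℝ) := by
      rw [hmdef' i]; exact Nat.le_ceil _
    have h2 : (2:ℝ) ^ (Real.logb 2 (t i / C)) ≤ (2:ℝ) ^ ((m i : ℕ) : ℝ) :=
      Real.rpow_le_rpow_of_exponent_le one_le_two hle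
    have h3 : ((2:ℝ) ^ ((m i : ℕ) : ℝ)) = 2 ^ (m i) := Real.rpow_natCast 2 (m i)
    have h4 : t i / C ≤ 2 ^ (m i) := by rw [h1, ← h3]; exact h2
    rw [div_le_iff₀ hC] at h4
    linarith
  have hmB : ∀ i, α i ≠ 0 → (m i : ℝ) ≤ B * c i := by
    intro i h
    have hai : 0 < α i := lt_of_le_of_ne (hα0 i) (Ne.symm h)
    have hceil : (m i : ℝ) < Real.logb 2 (t i / C) + 1 := by
      rw [hmdef' i]; exact Nat.ceil_lt_add_one (hlogt i h)
    have heq : t i / C = (2/δ) * c i * (α i)⁻¹ := by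
      rw [htdef' i]; field_simp
    have hlogeq : Real.logb 2 (t i / C)
        = Real.logb 2 (2/δ) + Real.logb 2 (c i) + Real.logb 2 (α i)⁻¹ := by
      rw [heq, Real.logb_mul (ne_of_gt (mul_pos (by positivity) (hc0 i)))
          (inv_ne_zero h),
        Real.logb_mul (by positivity) (ne_of_gt (hc0 i))]
    have h1 : Real.logb 2 (c i) ≤ 2 * c i := aux_logb_le (c i) (hc1 i)
    have h2 : Real.logb 2 (α i)⁻¹ = c i - 1 := by rw [hcdef]; simp only; ring
    have h3 : 1 ≤ c i := hc1 i
    rw [hlogeq] at hceil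
    rw [hBdef]
    nlinarith
  -- measurability
  have hSkm : ∀ i (k : ℕ), MeasurableSet {ω | C*2^k ≤ X i ω} :=
    fun i k => measurableSet_le measurable_const (hXm i)
  have hAm : ∀ i, MeasurableSet (A i) := by
    intro i
    rw [hAdef' i]
    by_cases h : α i = 0
    · simp [h]
    · rw [if_neg h]
      exact measurableSet_le measurable_const (hXm i)
  have hFm : ∀ i, Measurable (F i) := by
    intro i
    rw [hFdef]
    exact Finset.measurable_sum _ (fun k _ => measurable_const.indicator (hSkm i k))
  have hZm : Measurable Z := by
    rw [hZdef]
    exact Finset.measurable_sum _ (fun i _ => (hFm i).const_mul (α i))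
  -- union bound on the bad event A
  have hPA : ∀ i, (volume (A i)).toReal ≤ δ/2 * α i := by
    intro i
    rw [hAdef' i]
    by_cases h : α i = 0
    · simp [h]
    · have hai : 0 < α i := lt_of_le_of_ne (hα0 i) (Ne.symm h)
      rw [if_neg h]
      refine le_trans (hTail i (t i) (hti i h)) ?_
      rw [div_le_iff₀ (hti i h)]
      have heq : δ/2 * α i * t i = C * c i := by
        rw [htdef' i]; field_simp
      rw [heq]
      nlinarith [hc1 i]
  have hUnion : (volume (⋃ i, A i)).toReal ≤ δ/2 := by
    have h1 : volume (⋃ i, A i) ≤ ∑ i, volume (A i) := measure_iUnion_fintype_le _ _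
    have hne : ∀ i ∈ Finset.univ, volume (A i) ≠ ⊤ := fun i _ => measure_ne_top _ _
    calc (volume (⋃ i, A i)).toReal ≤ (∑ i, volume (A i)).toReal :=
          ENNReal.toReal_mono (ENNReal.sum_ne_top.mpr hne) h1
      _ = ∑ i, (volume (A i)).toReal := ENNReal.toReal_sum hne
      _ ≤ ∑ i, δ/2 * α i := Finset.sum_le_sum (fun i _ => hPA i)
      _ = δ/2 := by rw [← Finset.mul_sum, hα1, mul_one]
  -- integrability and expectation bound
  have hFint : ∀ i, Integrable (F i) := by
    intro i
    rw [hFdef]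
    exact integrable_finset_sum _ (fun k _ => (integrable_const _).indicator (hSkm i k))
  have hZint : Integrable Z := by
    rw [hZdef]
    exact integrable_finset_sum _ (fun i _ => (hFint i).const_mul (α i))
  have hEF : ∀ i, ∫ ω, F i ω ≤ C * (m i) := by
    intro i
    simp only [hFdef' i]
    rw [integral_finset_sum _ (fun k _ => (integrable_const _).indicator (hSkm i k))]
    have hterm : ∀ k ∈ Finset.range (m i),
        ∫ ω, Set.indicator {ω' | C*2^k ≤ X i ω'} (fun _ => C*2^k) ω ≤ C := by
      intro k _
      rw [integral_indicator_const _ (hSkm i k), smul_eq_mul]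
      have h1 := hTail i (C*2^k) (by positivity)
      have h2 : (0:ℝ) < C * 2^k := by positivity
      calc (volume {ω | C*2^k ≤ X i ω}).toReal * (C*2^k)
          ≤ (C / (C*2^k)) * (C*2^k) := by
            apply mul_le_mul_of_nonneg_right h1 (le_of_lt h2)
        _ = C := div_mul_cancel₀ C (ne_of_gt h2)
    calc ∑ k ∈ Finset.range (m i), ∫ ω, Set.indicator {ω' | C*2^k ≤ X i ω'} (fun _ => C*2^k) ω
        ≤ ∑ _k ∈ Finset.range (m i), C := Finset.sum_le_sum hterm
      _ = C * (m i) := by rw [Finset.sum_const, Finset.card_range, nsmul_eq_mul]; ring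
  have hEZ : ∫ ω, Z ω ≤ C * B * (1 + H) := by
    simp only [hZdef' _]
    rw [integral_finset_sum _ (fun i _ => (hFint i).const_mul (α i))]
    have hterm : ∀ i ∈ Finset.univ, (∫ ω, α i * F i ω) ≤ C * B * (α i * c i) := by
      intro i _
      rw [integral_const_mul]
      by_cases h : α i = 0
      · simp [h]
      · have hai : 0 < α i := lt_of_le_of_ne (hα0 i) (Ne.symm h)
        have h1 : α i * ∫ ω, F i ω ≤ α i * (C * (m i)) :=
          mul_le_mul_of_nonneg_left (hEF i) (hα0 i)
        have h2 : (m i : ℝ) ≤ B * c i := hmB i h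
        have h3 := mul_le_mul_of_nonneg_left h2 (mul_nonneg (hα0 i) hC.le)
        nlinarith [h1, h3]
    calc ∑ i, ∫ ω, α i * F i ω ≤ ∑ i, C * B * (α i * c i) := Finset.sum_le_sum hterm
      _ = C * B * (1 + H) := by rw [← Finset.mul_sum, hsumc]
  -- Markov
  obtain ⟨ε, hεdef⟩ : ∃ ε : ℝ, ε = (2/δ)*C*B*(1+H) := ⟨_, rfl⟩
  have hεpos : 0 < ε := by
    rw [hεdef]
    have : 0 < (2/δ)*C*B := by positivity
    nlinarith
  have hZ0 : ∀ ω, 0 ≤ Z ω := by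
    intro ω
    rw [hZdef' ω]
    apply Finset.sum_nonneg
    intro i _
    apply mul_nonneg (hα0 i)
    rw [hFdef' i ω]
    apply Finset.sum_nonneg
    intro k _
    exact Set.indicator_nonneg (fun _ _ => by positivity) ω
  have hMarkov : (volume {ω | ε ≤ Z ω}).toReal ≤ δ/2 := by
    have hmk := mul_meas_ge_le_integral_of_nonneg (ae_of_all _ hZ0) hZint ε
    have heq : C * B * (1 + H) = ε * (δ/2) := by
      rw [hεdef]; field_simp
    have h1 : ε * (volume {ω | ε ≤ Z ω}).toReal ≤ ε * (δ/2) := by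
      rw [← heq]; exact le_trans hmk hEZ
    exact le_of_mul_le_mul_left h1 hεpos
  -- combine
  obtain ⟨Bad, hBaddef⟩ : ∃ Bad : Set Ω, Bad = (⋃ i, A i) ∪ {ω | ε ≤ Z ω} := ⟨_, rfl⟩
  have hBadm : MeasurableSet Bad := by
    rw [hBaddef]
    exact (MeasurableSet.iUnion hAm).union (measurableSet_le measurable_const hZm)
  have hPBad : (volume Bad).toReal ≤ δ := by
    rw [hBaddef]
    have h1 : volume ((⋃ i, A i) ∪ {ω | ε ≤ Z ω})
        ≤ volume (⋃ i, A i) + volume {ω | ε ≤ Z ω} := measure_union_le _ _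
    calc (volume ((⋃ i, A i) ∪ {ω | ε ≤ Z ω})).toReal
        ≤ (volume (⋃ i, A i) + volume {ω | ε ≤ Z ω}).toReal :=
          ENNReal.toReal_mono (ENNReal.add_ne_top.mpr ⟨measure_ne_top _ _, measure_ne_top _ _⟩) h1
      _ = (volume (⋃ i, A i)).toReal + (volume {ω | ε ≤ Z ω}).toReal :=
          ENNReal.toReal_add (measure_ne_top _ _) (measure_ne_top _ _)
      _ ≤ δ/2 + δ/2 := add_le_add hUnion hMarkov
      _ = δ := by ring
  have hIncl : Badᶜ ⊆ {ω | ∑ i, α i * X i ω ≤ (2*C + (2/δ)*C*B) * (1 + H)} := by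
    intro ω hω
    rw [hBaddef] at hω
    simp only [Set.mem_compl_iff, Set.mem_union, Set.mem_iUnion, Set.mem_setOf_eq,
      not_or, not_exists, not_le] at hω
    obtain ⟨hωA, hωZ⟩ := hω
    have hterm : ∀ i, α i * X i ω ≤ α i * (2*C) + α i * F i ω := by
      intro i
      by_cases h : α i = 0
      · simp [h]
      · have hωAi := hωA i
        rw [hAdef' i, if_neg h] at hωAi
        simp only [Set.mem_setOf_eq, not_le] at hωAi
        have hlt : X i ω < C * 2 ^ (m i) := lt_of_lt_of_le hωAi (htm i h)
        have hdy := aux_dyadic C hC (m i) (X i ω) (hX0 i ω) hlt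
        have hFeq : F i ω = ∑ k ∈ Finset.range (m i),
            (if C * 2 ^ k ≤ X i ω then C * 2 ^ k else 0) := by
          rw [hFdef' i ω]
          refine Finset.sum_congr rfl (fun k _ => ?_)
          rw [Set.indicator_apply]
          simp [Set.mem_setOf_eq]
        have hXle : X i ω ≤ 2*C + F i ω := by rw [hFeq]; exact hdy
        calc α i * X i ω ≤ α i * (2*C + F i ω) :=
              mul_le_mul_of_nonneg_left hXle (hα0 i)
          _ = α i * (2*C) + α i * F i ω := by ring
    have hsum : ∑ i, α i * X i ω ≤ 2*C + Z ω := by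
      calc ∑ i, α i * X i ω ≤ ∑ i, (α i * (2*C) + α i * F i ω) :=
            Finset.sum_le_sum (fun i _ => hterm i)
        _ = (∑ i, α i) * (2*C) + Z ω := by
            rw [Finset.sum_add_distrib, ← Finset.sum_mul, hZdef' ω]
        _ = 2*C + Z ω := by rw [hα1]; ring
    have hlt2 : ∑ i, α i * X i ω < 2*C + ε := by linarith [hωZ]
    have hfin : 2*C + ε ≤ (2*C + (2/δ)*C*B) * (1 + H) := by
      rw [hεdef]
      nlinarith [hH0, hC]
    exact le_of_lt (lt_of_lt_of_le hlt2 hfin)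
  have h1 : volume Badᶜ ≤ volume {ω | ∑ i, α i * X i ω ≤ (2*C + (2/δ)*C*B) * (1 + H)} :=
    measure_mono hIncl
  have h2 : (volume Badᶜ).toReal = 1 - (volume Bad).toReal := by
    rw [prob_compl_eq_one_sub hBadm,
      ENNReal.toReal_sub_of_le prob_le_one ENNReal.one_ne_top, ENNReal.toReal_one]
  calc 1 - δ ≤ 1 - (volume Bad).toReal := by linarith
    _ = (volume Badᶜ).toReal := h2.symm
    _ ≤ _ := ENNReal.toReal_mono (measure_ne_top _ _) h1
end

section
/- There exists a universal constant C > 0 with the following property. Let l ≥ 0 be an integer, Δ = 2^l, let x, y ∈ {0, …, Δ−1}², let u ∈ ℝ² and 0 < R ≤ 2Δ be such that both x and y lie in B_{ℓ1}(u, R). Then for every shift s ∈ ℤ²: Σ_{j=0}^{l} 2^j · [x and y lie in different cells of the grid 𝒢_{s,j}] ≤ C·R·𝒜_{u,R}(s), where [·] is the indicator. Equivalently, ‖G_s(e_x − e_y)‖₁ ≤ O(1)·R·𝒜_{u,R}(s), where e_x, e_y are the standard basis vectors of ℝ^{Δ×Δ} at x and y. -/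
open scoped Classical

/-- The grid with a corner at `s` and side length `2^j` cuts the `ℓ₁`-ball
`B_{ℓ₁}(x, R)` iff some grid line comes within distance `R` of `x` in one of the
two coordinates. -/
def gridCuts (s : ℝ × ℝ) (x : ℝ × ℝ) (R : ℝ) (j : ℕ) : Prop :=
  (∃ m : ℤ, |x.1 - s.1 - m * 2 ^ j| ≤ R) ∨ (∃ m : ℤ, |x.2 - s.2 - m * 2 ^ j| ≤ R)

/-- `𝒜_{x,R}(s)`: the side length of the finest of the grids `𝒢_{s,0}, …, 𝒢_{s,l}`
that does not cut `B_{ℓ₁}(x, R)` (or `2^{l+1}` if all of them cut it), divided by `R`. -/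
noncomputable def gridA (l : ℕ) (x : ℝ × ℝ) (R : ℝ) (s : ℝ × ℝ) : ℝ :=
  sInf ({(2 : ℝ) ^ (l + 1)} ∪
    {c : ℝ | ∃ j : ℕ, j ≤ l ∧ ¬ gridCuts s x R j ∧ c = 2 ^ j}) / R

/-- The cell of the grid `𝒢_{s,j}` (corner `s`, side `2^j`) containing a point `p`. -/
noncomputable def cellOf (s : ℤ × ℤ) (j : ℕ) (p : ℝ × ℝ) : ℤ × ℤ :=
  (⌊(p.1 - (s.1 : ℝ)) / 2 ^ j⌋, ⌊(p.2 - (s.2 : ℝ)) / 2 ^ j⌋)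

/-- Auxiliary: if no grid line of level `j0` comes within `R` of `c`, and `a, b` are
within `R` of `c`, then `a` and `b` have the same level-`j` floor for every `j ≥ j0`. -/
lemma floor_le_floor_aux {c a b R : ℝ} {j0 j : ℕ} (hj : j0 ≤ j)
    (hcut : ∀ m : ℤ, ¬ |c - m * 2 ^ j0| ≤ R)
    (ha : |a - c| ≤ R) (hb : |b - c| ≤ R) :
    ⌊a / 2 ^ j⌋ ≤ ⌊b / 2 ^ j⌋ := by
  by_contra h
  push_neg at h
  set m : ℤ := ⌊a / (2:ℝ) ^ j⌋ with hm
  have h2j : (0:ℝ) < 2 ^ j := by positivity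
  have h1 : (m:ℝ) * 2 ^ j ≤ a := by
    have h0 := Int.floor_le (a / (2:ℝ) ^ j)
    have : (m:ℝ) * 2 ^ j ≤ (a / 2 ^ j) * 2 ^ j := by nlinarith
    calc (m:ℝ) * 2 ^ j ≤ (a / 2 ^ j) * 2 ^ j := this
    _ = a := by field_simp
  have h2 : b < (m:ℝ) * 2 ^ j := by
    have hlt : b / (2:ℝ) ^ j < (m:ℝ) := by
      have h3 : (⌊b / (2:ℝ) ^ j⌋ : ℝ) + 1 ≤ (m:ℝ) := by exact_mod_cast h
      have h4 := Int.lt_floor_add_one (b / (2:ℝ) ^ j)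
      linarith
    calc b = (b / 2 ^ j) * 2 ^ j := by field_simp
    _ < (m:ℝ) * 2 ^ j := by nlinarith
  have key : ((m * 2 ^ (j - j0) : ℤ) : ℝ) * 2 ^ j0 = (m:ℝ) * 2 ^ j := by
    push_cast
    rw [mul_assoc, ← pow_add, Nat.sub_add_cancel hj]
  have hc := hcut (m * 2 ^ (j - j0))
  rw [key] at hc
  apply hc
  have ha' := abs_le.1 ha
  have hb' := abs_le.1 hb
  rw [abs_le]
  constructor <;> linarith

lemma floor_eq_of_noCut {c a b R : ℝ} {j0 j : ℕ} (hj : j0 ≤ j)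
    (hcut : ∀ m : ℤ, ¬ |c - m * 2 ^ j0| ≤ R)
    (ha : |a - c| ≤ R) (hb : |b - c| ≤ R) :
    ⌊a / 2 ^ j⌋ = ⌊b / 2 ^ j⌋ :=
  le_antisymm (floor_le_floor_aux hj hcut ha hb) (floor_le_floor_aux hj hcut hb ha)

lemma geomSumTwo (n : ℕ) : ∑ j ∈ Finset.range n, (2:ℝ) ^ j = 2 ^ n - 1 := by
  rw [geom_sum_eq (by norm_num : (2:ℝ) ≠ 1)]
  norm_num

/-- Lemma `ball_cover`: if `x, y ∈ {0,…,Δ−1}²` both lie in `B_{ℓ₁}(u, R)`, then for every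
shift `s ∈ ℤ²` the quantity `‖G_s(e_x − e_y)‖₁ = Σ_j 2^j ⋅ [x, y in different cells of 𝒢_{s,j}]`
is at most `O(1) ⋅ R ⋅ 𝒜_{u,R}(s)`. -/
theorem stmt_6 : ∃ C : ℝ, 0 < C ∧
    ∀ (l : ℕ) (x y : Fin (2 ^ l) × Fin (2 ^ l)) (u : ℝ × ℝ) (R : ℝ),
      0 < R → R ≤ 2 * 2 ^ l →
      |((x.1 : ℕ) : ℝ) - u.1| + |((x.2 : ℕ) : ℝ) - u.2| ≤ R →
      |((y.1 : ℕ) : ℝ) - u.1| + |((y.2 : ℕ) : ℝ) - u.2| ≤ R →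
      ∀ s : ℤ × ℤ,
        (∑ j ∈ Finset.range (l + 1), (2 : ℝ) ^ j *
            (if cellOf s j (((x.1 : ℕ) : ℝ), ((x.2 : ℕ) : ℝ)) ≠
                cellOf s j (((y.1 : ℕ) : ℝ), ((y.2 : ℕ) : ℝ)) then 1 else 0))
          ≤ C * R * gridA l u R (((s.1 : ℤ) : ℝ), ((s.2 : ℤ) : ℝ)) := by
  refine ⟨1, one_pos, ?_⟩
  intro l x y u R hR hRl hx hy s
  set s' : ℝ × ℝ := (((s.1 : ℤ) : ℝ), ((s.2 : ℤ) : ℝ)) with hs'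
  set S : Set ℝ := {(2 : ℝ) ^ (l + 1)} ∪
    {c : ℝ | ∃ j : ℕ, j ≤ l ∧ ¬ gridCuts s' u R j ∧ c = 2 ^ j} with hS
  have hrw : (1:ℝ) * R * gridA l u R s' = sInf S := by
    rw [hS, gridA, one_mul, mul_comm, div_mul_cancel₀ _ hR.ne']
  rw [hrw]
  -- coordinatewise ball membership
  have hx1 : |((x.1 : ℕ) : ℝ) - u.1| ≤ R := le_trans (le_add_of_nonneg_right (abs_nonneg _)) hx
  have hx2 : |((x.2 : ℕ) : ℝ) - u.2| ≤ R := le_trans (le_add_of_nonneg_left (abs_nonneg _)) hx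
  have hy1 : |((y.1 : ℕ) : ℝ) - u.1| ≤ R := le_trans (le_add_of_nonneg_right (abs_nonneg _)) hy
  have hy2 : |((y.2 : ℕ) : ℝ) - u.2| ≤ R := le_trans (le_add_of_nonneg_left (abs_nonneg _)) hy
  by_cases hex : ∃ j : ℕ, j ≤ l ∧ ¬ gridCuts s' u R j
  · -- minimal non-cutting level
    set j0 := Nat.find hex with hj0def
    obtain ⟨hj0l, hj0nc⟩ := Nat.find_spec hex
    -- sInf S ≥ 2^j0
    have hSne : S.Nonempty := ⟨(2:ℝ) ^ (l + 1), Or.inl rfl⟩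
    have hlow : (2:ℝ) ^ j0 ≤ sInf S := by
      apply le_csInf hSne
      rintro c (hc | ⟨j, hjl, hnc, rfl⟩)
      · rw [Set.mem_singleton_iff] at hc
        rw [hc]
        exact pow_le_pow_right₀ one_le_two (by omega)
      · have : j0 ≤ j := Nat.find_min' hex ⟨hjl, hnc⟩
        exact pow_le_pow_right₀ one_le_two this
    -- cells agree for all j ≥ j0
    rw [gridCuts, not_or] at hj0nc
    obtain ⟨hnc1, hnc2⟩ := hj0nc
    rw [not_exists] at hnc1 hnc2
    have hcells : ∀ j, j0 ≤ j →
        cellOf s j (((x.1 : ℕ) : ℝ), ((x.2 : ℕ) : ℝ)) =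
        cellOf s j (((y.1 : ℕ) : ℝ), ((y.2 : ℕ) : ℝ)) := by
      intro j hj
      have e1 : ⌊(((x.1 : ℕ) : ℝ) - ((s.1 : ℤ) : ℝ)) / 2 ^ j⌋ =
          ⌊(((y.1 : ℕ) : ℝ) - ((s.1 : ℤ) : ℝ)) / 2 ^ j⌋ := by
        refine floor_eq_of_noCut (c := u.1 - ((s.1 : ℤ) : ℝ)) (R := R) hj ?_ ?_ ?_
        · intro m hm
          exact hnc1 m (by simpa [hs', sub_sub] using hm)
        · have : ((x.1 : ℕ) : ℝ) - ((s.1 : ℤ) : ℝ) - (u.1 - ((s.1 : ℤ) : ℝ)) =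
              ((x.1 : ℕ) : ℝ) - u.1 := by ring
          rw [this]; exact hx1
        · have : ((y.1 : ℕ) : ℝ) - ((s.1 : ℤ) : ℝ) - (u.1 - ((s.1 : ℤ) : ℝ)) =
              ((y.1 : ℕ) : ℝ) - u.1 := by ring
          rw [this]; exact hy1
      have e2 : ⌊(((x.2 : ℕ) : ℝ) - ((s.2 : ℤ) : ℝ)) / 2 ^ j⌋ =
          ⌊(((y.2 : ℕ) : ℝ) - ((s.2 : ℤ) : ℝ)) / 2 ^ j⌋ := by
        refine floor_eq_of_noCut (c := u.2 - ((s.2 : ℤ) : ℝ)) (R := R) hj ?_ ?_ ?_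
        · intro m hm
          exact hnc2 m (by simpa [hs', sub_sub] using hm)
        · have : ((x.2 : ℕ) : ℝ) - ((s.2 : ℤ) : ℝ) - (u.2 - ((s.2 : ℤ) : ℝ)) =
              ((x.2 : ℕ) : ℝ) - u.2 := by ring
          rw [this]; exact hx2
        · have : ((y.2 : ℕ) : ℝ) - ((s.2 : ℤ) : ℝ) - (u.2 - ((s.2 : ℤ) : ℝ)) =
              ((y.2 : ℕ) : ℝ) - u.2 := by ring
          rw [this]; exact hy2
      simp [cellOf, e1, e2]
    -- split the sum at j0
    have hsplit :
        (∑ j ∈ Finset.range (l + 1), (2 : ℝ) ^ j *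
            (if cellOf s j (((x.1 : ℕ) : ℝ), ((x.2 : ℕ) : ℝ)) ≠
                cellOf s j (((y.1 : ℕ) : ℝ), ((y.2 : ℕ) : ℝ)) then 1 else 0))
          = (∑ j ∈ Finset.Ico 0 j0, (2 : ℝ) ^ j *
            (if cellOf s j (((x.1 : ℕ) : ℝ), ((x.2 : ℕ) : ℝ)) ≠
                cellOf s j (((y.1 : ℕ) : ℝ), ((y.2 : ℕ) : ℝ)) then 1 else 0))
          + (∑ j ∈ Finset.Ico j0 (l + 1), (2 : ℝ) ^ j *
            (if cellOf s j (((x.1 : ℕ) : ℝ), ((x.2 : ℕ) : ℝ)) ≠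
                cellOf s j (((y.1 : ℕ) : ℝ), ((y.2 : ℕ) : ℝ)) then 1 else 0)) := by
      rw [Finset.range_eq_Ico, ← Finset.sum_Ico_consecutive _ (Nat.zero_le j0) (by omega)]
    rw [hsplit]
    have hz : (∑ j ∈ Finset.Ico j0 (l + 1), (2 : ℝ) ^ j *
            (if cellOf s j (((x.1 : ℕ) : ℝ), ((x.2 : ℕ) : ℝ)) ≠
                cellOf s j (((y.1 : ℕ) : ℝ), ((y.2 : ℕ) : ℝ)) then 1 else 0)) = 0 := by
      apply Finset.sum_eq_zero
      intro j hj
      rw [Finset.mem_Ico] at hj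
      simp [hcells j hj.1]
    rw [hz, add_zero]
    have hle : (∑ j ∈ Finset.Ico 0 j0, (2 : ℝ) ^ j *
            (if cellOf s j (((x.1 : ℕ) : ℝ), ((x.2 : ℕ) : ℝ)) ≠
                cellOf s j (((y.1 : ℕ) : ℝ), ((y.2 : ℕ) : ℝ)) then 1 else 0))
          ≤ ∑ j ∈ Finset.range j0, (2 : ℝ) ^ j := by
      rw [← Finset.range_eq_Ico]
      apply Finset.sum_le_sum
      intro j _
      split <;> simp
    have hgeo := geomSumTwo j0
    have h2j0 : (0:ℝ) < 2 ^ j0 := by positivity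
    linarith
  · -- no non-cutting level : S = {2^(l+1)}
    have hempty : {c : ℝ | ∃ j : ℕ, j ≤ l ∧ ¬ gridCuts s' u R j ∧ c = 2 ^ j} = ∅ := by
      ext c
      simp only [Set.mem_setOf_eq, Set.mem_empty_iff_false, iff_false]
      rintro ⟨j, hjl, hnc, _⟩
      exact hex ⟨j, hjl, hnc⟩
    have hSval : sInf S = (2:ℝ) ^ (l + 1) := by
      rw [hS, hempty, Set.union_empty, csInf_singleton]
    rw [hSval]
    have hle : (∑ j ∈ Finset.range (l + 1), (2 : ℝ) ^ j *
            (if cellOf s j (((x.1 : ℕ) : ℝ), ((x.2 : ℕ) : ℝ)) ≠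
                cellOf s j (((y.1 : ℕ) : ℝ), ((y.2 : ℕ) : ℝ)) then 1 else 0))
          ≤ ∑ j ∈ Finset.range (l + 1), (2 : ℝ) ^ j := by
      apply Finset.sum_le_sum
      intro j _
      split <;> simp
    have hgeo := geomSumTwo (l + 1)
    linarith
end

section
/- There exists a universal constant C > 0 with the following property. Let k ≥ 2 and N ≥ 2 be integers, and let c : {1,…,k} × ℕ → ℕ be a finitely supported function with Σ_{i,j} c(i,j) = N. Define β_{i,j} := c(i,j)·2^j, T := Σ_{i,j} β_{i,j}, and the probability vector α_{i,j} := β_{i,j}/T. Then H(α) := Σ_{i,j} α_{i,j}·log₂(1/α_{i,j}) ≤ C·(log₂ k + log₂ log₂ N). -/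
/-!
Compare `α` with the sub-probability vector `q (i, j) = p j / k` via Gibbs' inequality, so that
`H(α) ≤ log₂ k + Σ α_{i,j} log₂ (1 / p j)`. Let `J` be the top level occupied; then `T ≥ 2^J`.
The profile `p = windowWeight J m` spreads mass `1/2` uniformly over the `m ≈ 2 log₂ N` levels
just below `J`, costing at most `log₂ (2m) = O(log log N)`, and gives level `j ≤ J - m` the mass
`2^(j-J)`. A ball at such a level contributes at most `2^(j-J) (J - j) ≤ m / 2^m` to the cross
entropy, and `N m / 2^m ≤ 1`.
-/

open Finset Real

lemma sum_mul_logb_inv_le_of_sum_le_one {ι : Type*} {s : Finset ι} {a q : ι → ℝ}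
    (ha : ∀ x ∈ s, 0 < a x) (hq : ∀ x ∈ s, 0 < q x)
    (ha1 : ∑ x ∈ s, a x = 1) (hq1 : ∑ x ∈ s, q x ≤ 1) :
    ∑ x ∈ s, a x * logb 2 (a x)⁻¹ ≤ ∑ x ∈ s, a x * logb 2 (q x)⁻¹ := by
  have hlog2 : 0 < log 2 := log_pos one_lt_two
  have hterm : ∀ x ∈ s,
      a x * logb 2 (a x)⁻¹ - a x * logb 2 (q x)⁻¹ ≤ (q x - a x) / log 2 := by
    intro x hx
    have hax := ha x hx
    have hqx := hq x hx
    calc a x * logb 2 (a x)⁻¹ - a x * logb 2 (q x)⁻¹ = a x * log (q x / a x) / log 2 := by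
          rw [logb, logb, log_inv, log_inv, log_div hqx.ne' hax.ne']; ring
      _ ≤ a x * (q x / a x - 1) / log 2 := by
          gcongr; exact log_le_sub_one_of_pos (by positivity)
      _ = (q x - a x) / log 2 := by field_simp
  have hsum := sum_le_sum hterm
  rw [sum_sub_distrib, ← sum_div, sum_sub_distrib, ha1] at hsum
  have : (∑ x ∈ s, q x - 1) / log 2 ≤ 0 := div_nonpos_of_nonpos_of_nonneg (by linarith) hlog2.le
  linarith

lemma antitoneOn_natCast_div_two_pow : AntitoneOn (fun n : ℕ => (n : ℝ) / 2 ^ n) (Set.Ici 1) := by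
  intro m hm n _ hmn
  obtain ⟨d, rfl⟩ := Nat.exists_eq_add_of_le hmn
  have hd : (d : ℝ) + 1 ≤ 2 ^ d := by exact_mod_cast d.lt_two_pow_self
  have hm : (1 : ℝ) ≤ m := by exact_mod_cast hm
  dsimp only
  rw [div_le_div_iff₀ (by positivity) (by positivity), pow_add]
  push_cast
  have h2m : (0 : ℝ) < 2 ^ m := by positivity
  calc ((m : ℝ) + d) * 2 ^ m ≤ m * (d + 1) * 2 ^ m := by gcongr; nlinarith
    _ ≤ m * 2 ^ d * 2 ^ m := by gcongr
    _ = m * (2 ^ m * 2 ^ d) := by ring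

lemma one_le_logb_two_natCast {n : ℕ} (hn : 2 ≤ n) : 1 ≤ logb 2 n := by
  have h := natLog_le_logb n 2
  have hpos : 0 < Nat.log 2 n := Nat.log_pos one_lt_two hn
  push_cast at h
  exact le_trans (by exact_mod_cast hpos) h

noncomputable def windowWeight (J m j : ℕ) : ℝ :=
  if J < j + m then (2 * m : ℝ)⁻¹ else 2 ^ j / 2 ^ J

section windowWeight

variable {J m j : ℕ}

lemma windowWeight_of_lt (h : J < j + m) : windowWeight J m j = (2 * m : ℝ)⁻¹ := if_pos h

lemma windowWeight_of_not_lt (h : ¬J < j + m) : windowWeight J m j = 2 ^ j / 2 ^ J := if_neg h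

lemma windowWeight_pos (hm : 0 < m) (j : ℕ) : 0 < windowWeight J m j := by
  unfold windowWeight
  split_ifs <;> positivity

lemma sum_windowWeight_le_one {S : Finset ℕ} (hS : ∀ j ∈ S, j ≤ J) (hm : 2 ≤ m) :
    ∑ j ∈ S, windowWeight J m j ≤ 1 := by
  rw [← sum_filter_add_sum_filter_not S (fun j => J < j + m)]
  have hwindow : ∑ j ∈ S with J < j + m, windowWeight J m j ≤ 1 / 2 := by
    have hcard : #{j ∈ S | J < j + m} ≤ m :=
      calc #{j ∈ S | J < j + m} ≤ #(Icc (J + 1 - m) J) := card_le_card fun j hj => by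
            simp only [mem_filter, mem_Icc] at hj ⊢
            have := hS j hj.1
            omega
        _ ≤ m := by simp only [Nat.card_Icc]; omega
    rw [sum_congr rfl fun j hj => windowWeight_of_lt (mem_filter.1 hj).2, sum_const, nsmul_eq_mul]
    calc (#{j ∈ S | J < j + m} : ℝ) * (2 * m : ℝ)⁻¹ ≤ m * (2 * m : ℝ)⁻¹ := by
          gcongr
      _ = 1 / 2 := by field_simp
  have htail : ∑ j ∈ S with ¬J < j + m, windowWeight J m j ≤ 1 / 2 := by
    rw [sum_congr rfl fun j hj => windowWeight_of_not_lt (mem_filter.1 hj).2, ← sum_div,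
      div_le_iff₀ (by positivity)]
    -- the doubled powers `2^(j+1)` have distinct exponents below `J`
    have hgeom : ∑ j ∈ S with ¬J < j + m, 2 ^ (j + 1) < 2 ^ J := by
      have := Nat.geomSum_lt le_rfl (n := J)
        (s := {j ∈ S | ¬J < j + m}.map (addRightEmbedding 1)) (by
          simp only [not_lt, mem_map, mem_filter, addRightEmbedding_apply, forall_exists_index,
            and_imp]
          omega)
      simpa only [sum_map, addRightEmbedding_apply] using this
    have hgeomR : ∑ j ∈ S with ¬J < j + m, (2 : ℝ) ^ j * 2 < 2 ^ J := by
      simp only [← pow_succ]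
      exact_mod_cast hgeom
    rw [← sum_mul] at hgeomR
    linarith
  linarith

lemma mul_logb_inv_windowWeight_le {a c : ℝ} (hj : j ≤ J) (hm : 1 ≤ m) (ha : 0 ≤ a)
    (haJ : a ≤ c * 2 ^ j / 2 ^ J) :
    a * logb 2 (windowWeight J m j)⁻¹ ≤ a * logb 2 (2 * m) + c * (m / 2 ^ m) := by
  have hc : 0 ≤ c := by
    have := ha.trans haJ
    rwa [mul_div_assoc, mul_nonneg_iff_of_pos_right (by positivity)] at this
  have hm' : (1 : ℝ) ≤ m := by exact_mod_cast hm
  have hlogm : 0 ≤ logb 2 (2 * m) := logb_nonneg one_lt_two (by linarith)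
  by_cases h : J < j + m
  · rw [windowWeight_of_lt h, inv_inv]
    have : 0 ≤ c * (m / 2 ^ m) := by positivity
    linarith
  · rw [windowWeight_of_not_lt h]
    obtain ⟨d, rfl⟩ : ∃ d, J = j + d := ⟨J - j, by omega⟩
    have hlog : logb 2 ((2 : ℝ) ^ j / 2 ^ (j + d))⁻¹ = d := by
      rw [inv_div, pow_add, mul_div_cancel_left₀ _ (by positivity), logb_pow,
        logb_self_eq_one one_lt_two, mul_one]
    have ha' : a ≤ c / 2 ^ d := by
      rwa [pow_add, mul_comm ((2 : ℝ) ^ j), mul_div_mul_right _ _ (by positivity)] at haJ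
    have hdm : (d : ℝ) / 2 ^ d ≤ m / 2 ^ m :=
      antitoneOn_natCast_div_two_pow (Set.mem_Ici.2 hm) (Set.mem_Ici.2 (by omega)) (by omega)
    calc a * logb 2 ((2 : ℝ) ^ j / 2 ^ (j + d))⁻¹ = a * d := by rw [hlog]
      _ ≤ c / 2 ^ d * d := by gcongr
      _ = c * (d / 2 ^ d) := by ring
      _ ≤ c * (m / 2 ^ m) := by gcongr
      _ ≤ a * logb 2 (2 * m) + c * (m / 2 ^ m) := by
          have : 0 ≤ a * logb 2 (2 * m) := by positivity
          linarith

end windowWeight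

section Bins

variable {ι : Type*} [Fintype ι]

lemma sum_div_card_le_sum_image_snd {κ : Type*} [DecidableEq κ] (s : Finset (ι × κ))
    {f : κ → ℝ} (hf : ∀ j, 0 ≤ f j) :
    ∑ x ∈ s, f x.2 / Fintype.card ι ≤ ∑ j ∈ s.image Prod.snd, f j := by
  have hsub : s ⊆ univ ×ˢ s.image Prod.snd := fun x hx =>
    mem_product.2 ⟨mem_univ _, mem_image_of_mem _ hx⟩
  calc ∑ x ∈ s, f x.2 / Fintype.card ι ≤ ∑ x ∈ univ ×ˢ s.image Prod.snd, f x.2 / Fintype.card ι :=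
        sum_le_sum_of_subset_of_nonneg hsub fun x _ _ => div_nonneg (hf _) (Nat.cast_nonneg _)
    _ = Fintype.card ι * (∑ j ∈ s.image Prod.snd, f j / Fintype.card ι) := by
        simp only [sum_product, sum_const, card_univ, nsmul_eq_mul]
    _ ≤ ∑ j ∈ s.image Prod.snd, f j := by
        rw [← sum_div, mul_div_assoc']
        exact div_le_of_le_mul₀ (Nat.cast_nonneg _) (sum_nonneg fun j _ => hf j) (mul_comm _ _).le

theorem sum_mul_logb_inv_le_logb_card_add (c : ι × ℕ →₀ ℕ) (hc : c ≠ 0) {m : ℕ} (hm : 2 ≤ m)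
    (T : ℝ) (hT : T = ∑ x ∈ c.support, ((c x * 2 ^ x.2 : ℕ) : ℝ)) :
    ∑ x ∈ c.support, (((c x * 2 ^ x.2 : ℕ) : ℝ) / T) *
        logb 2 ((((c x * 2 ^ x.2 : ℕ) : ℝ) / T)⁻¹)
      ≤ logb 2 (Fintype.card ι) + logb 2 (2 * m) + (∑ x ∈ c.support, (c x : ℝ)) * (m / 2 ^ m) := by
  classical
  set s := c.support
  set a : ι × ℕ → ℝ := fun x => ((c x * 2 ^ x.2 : ℕ) : ℝ) / T
  obtain ⟨x₀, hx₀, hJ⟩ := exists_mem_eq_sup s (Finsupp.support_nonempty_iff.2 hc) Prod.snd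
  set J := s.sup Prod.snd
  have hβ : ∀ x ∈ s, 0 < ((c x * 2 ^ x.2 : ℕ) : ℝ) := fun x hx => by
    have := Finsupp.mem_support_iff.1 hx
    positivity
  have hT0 : 0 < T := hT ▸ sum_pos hβ ⟨x₀, hx₀⟩
  have hTJ : (2 : ℝ) ^ J ≤ T := by
    calc (2 : ℝ) ^ J ≤ ((c x₀ * 2 ^ x₀.2 : ℕ) : ℝ) := by
          rw [hJ]
          exact_mod_cast Nat.le_mul_of_pos_left _
            (Nat.pos_of_ne_zero (Finsupp.mem_support_iff.1 hx₀))
      _ ≤ T := hT ▸ single_le_sum (fun x hx => (hβ x hx).le) hx₀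
  have ha : ∀ x ∈ s, 0 < a x := fun x hx => div_pos (hβ x hx) hT0
  have ha1 : ∑ x ∈ s, a x = 1 := by rw [← sum_div, ← hT, div_self hT0.ne']
  have hk : (0 : ℝ) < Fintype.card ι := by
    have : Nonempty ι := ⟨x₀.1⟩
    exact_mod_cast Fintype.card_pos
  have hw := windowWeight_pos (J := J) (by omega : 0 < m)
  have hq1 : ∑ x ∈ s, windowWeight J m x.2 / Fintype.card ι ≤ 1 :=
    (sum_div_card_le_sum_image_snd s fun j => (hw j).le).trans <|
      sum_windowWeight_le_one (by simp only [mem_image]; rintro _ ⟨x, hx, rfl⟩; exact le_sup hx) hm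
  calc ∑ x ∈ s, a x * logb 2 (a x)⁻¹
      ≤ ∑ x ∈ s, a x * logb 2 (windowWeight J m x.2 / Fintype.card ι)⁻¹ :=
        sum_mul_logb_inv_le_of_sum_le_one ha (fun x _ => div_pos (hw _) hk) ha1 hq1
    _ = logb 2 (Fintype.card ι) + ∑ x ∈ s, a x * logb 2 (windowWeight J m x.2)⁻¹ := by
        rw [← one_mul (logb 2 (Fintype.card ι : ℝ)), ← ha1, sum_mul, ← sum_add_distrib]
        refine sum_congr rfl fun x _ => ?_
        rw [inv_div, logb_div hk.ne' (hw _).ne', logb_inv]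
        ring
    _ ≤ logb 2 (Fintype.card ι) + ∑ x ∈ s, (a x * logb 2 (2 * m) + c x * (m / 2 ^ m)) := by
        gcongr with x hx
        refine mul_logb_inv_windowWeight_le (le_sup hx) (by omega) (ha x hx).le ?_
        calc a x ≤ ((c x * 2 ^ x.2 : ℕ) : ℝ) / 2 ^ J :=
              div_le_div_of_nonneg_left (hβ x hx).le (by positivity) hTJ
          _ = c x * 2 ^ x.2 / 2 ^ J := by push_cast; ring
    _ = _ := by rw [sum_add_distrib, ← sum_mul, ← sum_mul, ha1, one_mul, add_assoc]

end Bins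

lemma exists_window_width {N : ℕ} (hN : 2 ≤ N) :
    ∃ m : ℕ, 2 ≤ m ∧ (N : ℝ) * (m / 2 ^ m) ≤ 1 ∧ logb 2 (2 * m) ≤ 4 + logb 2 (logb 2 N) := by
  set L := Nat.log 2 N + 1
  refine ⟨2 * L + 1, by omega, ?_, ?_⟩
  · have hNL : N ≤ 2 ^ L := (Nat.lt_pow_succ_log_self one_lt_two N).le
    have hL : 2 * L + 1 ≤ 2 ^ (L + 1) := by
      have := L.lt_two_pow_self
      rw [pow_succ]
      omega
    have hprod : N * (2 * L + 1) ≤ 2 ^ (2 * L + 1) :=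
      calc N * (2 * L + 1) ≤ 2 ^ L * 2 ^ (L + 1) := Nat.mul_le_mul hNL hL
        _ = 2 ^ (2 * L + 1) := by rw [← pow_add]; ring_nf
    rw [mul_div_assoc', div_le_one (by positivity)]
    exact_mod_cast hprod
  · have hlog : (Nat.log 2 N : ℝ) ≤ logb 2 N := by exact_mod_cast natLog_le_logb N 2
    have h1 : 1 ≤ logb 2 N := one_le_logb_two_natCast hN
    calc logb 2 (2 * ((2 * L + 1 : ℕ) : ℝ)) ≤ logb 2 (2 ^ 4 * logb 2 N) :=
          logb_le_logb_of_le one_lt_two (by positivity) (by push_cast [L]; linarith)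
      _ = 4 + logb 2 (logb 2 N) := by
          rw [logb_mul (by positivity) (by positivity), logb_pow, logb_self_eq_one one_lt_two,
            mul_one, Nat.cast_ofNat]

/-- Combinatorial entropy bound: place `N` balls into bins `(i, j) ∈ {1,…,k} × ℕ`
(`c (i, j)` balls in bin `(i, j)`, finitely many nonzero), weight bin `(i, j)` by `2^j`
(`β_{i,j} = c(i,j) 2^j`, `T = Σ β`, `α = β / T`); then
`H(α) ≤ C (log₂ k + log₂ log₂ N)`. -/
theorem stmt_8 : ∃ C : ℝ, 0 < C ∧
    ∀ (k N : ℕ), 2 ≤ k → 2 ≤ N →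
    ∀ c : (Fin k × ℕ) →₀ ℕ, (∑ x ∈ c.support, c x) = N →
    ∀ T : ℝ, T = ∑ x ∈ c.support, ((c x * 2 ^ x.2 : ℕ) : ℝ) →
    (∑ x ∈ c.support,
        (((c x * 2 ^ x.2 : ℕ) : ℝ) / T) *
          Real.logb 2 ((((c x * 2 ^ x.2 : ℕ) : ℝ) / T)⁻¹))
      ≤ C * (Real.logb 2 k + Real.logb 2 (Real.logb 2 N)) := by
  refine ⟨6, by norm_num, fun k N hk hN c hc T hT => ?_⟩
  obtain ⟨m, hm, hNm, hlogm⟩ := exists_window_width hN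
  have hc0 : c ≠ 0 := by
    rintro rfl
    simp only [Finsupp.support_zero, sum_empty] at hc
    omega
  have hcN : ∑ x ∈ c.support, (c x : ℝ) = N := by exact_mod_cast hc
  have hlogk : 1 ≤ logb 2 k := one_le_logb_two_natCast hk
  have hloglogN : 0 ≤ logb 2 (logb 2 N) :=
    logb_nonneg one_lt_two (one_le_logb_two_natCast hN)
  have hH := sum_mul_logb_inv_le_logb_card_add c hc0 hm T hT
  rw [Fintype.card_fin, hcN] at hH
  linarith
end

section
/- Let m ≥ 1 be an integer, r > 0, ε > 0, and c ∈ (0, 1/2). Let v ∈ ℝ^m satisfy |{i : |v_i| < (1−ε)·r}| ≤ (1/2 − c)·m and |{i : |v_i| > (1+ε)·r}| ≤ (1/2 − c)·m. Then for every y ∈ ℝ^m with |{i : |y_i| > ε·r}| < c·m, one has (1 − 2ε)·r ≤ ‖v + y‖_med ≤ (1 + 2ε)·r. -/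
open scoped Classical

/-- `‖v‖_med`: the `⌈m/2⌉`-th smallest value among `|v₁|, …, |v_m|`
(the median of the absolute values). -/
noncomputable def medNorm {m : ℕ} (v : Fin m → ℝ) : ℝ :=
  sInf {t : ℝ | (m + 1) / 2 ≤ (Finset.univ.filter fun i => |v i| ≤ t).card}

/-- Robustness of the median of absolute values for "good" vectors: if at most a
`(1/2 − c)` fraction of the coordinates of `v` are below `(1−ε)r` in absolute value, at
most a `(1/2 − c)` fraction are above `(1+ε)r`, and `y` exceeds `εr` in absolute value on
fewer than `c·m` coordinates, then `(1 − 2ε)r ≤ ‖v + y‖_med ≤ (1 + 2ε)r`. -/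
theorem stmt_13 (m : ℕ) (hm : 1 ≤ m) (r ε c : ℝ)
    (hr : 0 < r) (hε : 0 < ε) (hc0 : 0 < c) (hc : c < 1 / 2)
    (v : Fin m → ℝ)
    (h1 : ((Finset.univ.filter fun i => |v i| < (1 - ε) * r).card : ℝ) ≤ (1 / 2 - c) * m)
    (h2 : ((Finset.univ.filter fun i => (1 + ε) * r < |v i|).card : ℝ) ≤ (1 / 2 - c) * m)
    (y : Fin m → ℝ)
    (hy : ((Finset.univ.filter fun i => ε * r < |y i|).card : ℝ) < c * m) :
    (1 - 2 * ε) * r ≤ medNorm (fun i => v i + y i) ∧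
      medNorm (fun i => v i + y i) ≤ (1 + 2 * ε) * r := by
  set w : Fin m → ℝ := fun i => v i + y i with hw
  set S : Finset (Fin m) := Finset.univ.filter fun i => (1 + ε) * r < |v i| with hS
  set S' : Finset (Fin m) := Finset.univ.filter fun i => |v i| < (1 - ε) * r with hS'
  set T : Finset (Fin m) := Finset.univ.filter fun i => ε * r < |y i| with hT
  -- membership of (1+2ε)r in the set
  have hmem : (1 + 2 * ε) * r ∈
      {t : ℝ | (m + 1) / 2 ≤ (Finset.univ.filter fun i => |w i| ≤ t).card} := by
    have hsub : (S ∪ T)ᶜ ⊆ Finset.univ.filter fun i => |w i| ≤ (1 + 2 * ε) * r := by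
      intro i hi
      simp only [Finset.mem_compl, Finset.mem_union, hS, hT, Finset.mem_filter,
        Finset.mem_univ, true_and, not_or, not_lt] at hi
      simp only [Finset.mem_filter, Finset.mem_univ, true_and, hw]
      have := abs_add_le (v i) (y i)
      nlinarith [hi.1, hi.2]
    have hcard : m - (S ∪ T).card ≤ (Finset.univ.filter fun i => |w i| ≤ (1 + 2 * ε) * r).card := by
      have := Finset.card_le_card hsub
      rwa [Finset.card_compl, Fintype.card_fin] at this
    have hST : ((S ∪ T).card : ℝ) < m / 2 := by
      have := Finset.card_union_le S T
      have : ((S ∪ T).card : ℝ) ≤ (S.card : ℝ) + T.card := by exact_mod_cast this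
      linarith
    have hSTn : 2 * (S ∪ T).card < m := by
      have : 2 * ((S ∪ T).card : ℝ) < m := by linarith
      exact_mod_cast this
    have : (S ∪ T).card ≤ m := (Finset.card_le_card (Finset.subset_univ _)).trans
      (by simp)
    simp only [Set.mem_setOf_eq]
    omega
  have hne : {t : ℝ | (m + 1) / 2 ≤ (Finset.univ.filter fun i => |w i| ≤ t).card}.Nonempty :=
    ⟨_, hmem⟩
  have hbdd : BddBelow {t : ℝ | (m + 1) / 2 ≤ (Finset.univ.filter fun i => |w i| ≤ t).card} := by
    refine ⟨0, fun t ht => ?_⟩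
    by_contra hneg
    push_neg at hneg
    simp only [Set.mem_setOf_eq] at ht
    have : (Finset.univ.filter fun i => |w i| ≤ t) = ∅ := by
      apply Finset.filter_false_of_mem
      intro i _
      have := abs_nonneg (w i)
      linarith
    rw [this] at ht
    simp at ht
    omega
  constructor
  · -- lower bound
    apply le_csInf hne
    intro t ht
    simp only [Set.mem_setOf_eq] at ht
    by_contra hlt
    push_neg at hlt
    have hsub : (Finset.univ.filter fun i => |w i| ≤ t) ⊆ S' ∪ T := by
      intro i hi
      simp only [Finset.mem_filter, Finset.mem_univ, true_and, hw] at hi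
      simp only [Finset.mem_union, hS', hT, Finset.mem_filter, Finset.mem_univ, true_and]
      by_contra hcon
      push_neg at hcon
      have := abs_add_le (v i + y i) (-(y i))
      simp only [add_neg_cancel_right, abs_neg] at this
      nlinarith [hcon.1, hcon.2]
    have hcard := Finset.card_le_card hsub
    have hST : ((S' ∪ T).card : ℝ) < m / 2 := by
      have h := Finset.card_union_le S' T
      have : ((S' ∪ T).card : ℝ) ≤ (S'.card : ℝ) + T.card := by exact_mod_cast h
      linarith
    have : ((Finset.univ.filter fun i => |w i| ≤ t).card : ℝ) < m / 2 := by
      have : ((Finset.univ.filter fun i => |w i| ≤ t).card : ℝ) ≤ (S' ∪ T).card := by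
        exact_mod_cast hcard
      linarith
    have hn : 2 * (Finset.univ.filter fun i => |w i| ≤ t).card < m := by
      have h2r : 2 * ((Finset.univ.filter fun i => |w i| ≤ t).card : ℝ) < m := by linarith
      exact_mod_cast h2r
    omega
  · exact csInf_le hbdd hmem
end

section
/- Let n ≥ 1 be an integer, a > 0, and s ∈ ℝⁿ. Let U be a random vector distributed uniformly on the box [0, a]^n. Then the total variation distance between the law of U and the law of U + s is at most (Σ_{i=1}^{n} |s_i|)/a; in particular it is at most n·‖s‖_∞/a. -/
open MeasureTheory

section Aux

open Set

private lemma stmt16_ivl (a : ℝ) (c d : ℝ) :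
    volume (Icc c (a + c) \ Icc d (a + d)) ≤ ENNReal.ofReal |c - d| := by
  rcases le_total c d with h | h
  · calc volume (Icc c (a + c) \ Icc d (a + d)) ≤ volume (Ico c d) := by
          apply measure_mono
          rintro x ⟨⟨h1, h2⟩, hx⟩
          simp only [mem_Icc, not_and, not_le] at hx
          refine ⟨h1, ?_⟩
          by_contra h3
          exact absurd (hx (le_of_not_gt h3)) (not_lt.2 (h2.trans (by linarith)))
       _ = ENNReal.ofReal (d - c) := Real.volume_Ico
       _ = ENNReal.ofReal |c - d| := by rw [abs_sub_comm, abs_of_nonneg (by linarith)]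
  · calc volume (Icc c (a + c) \ Icc d (a + d)) ≤ volume (Ioc (a + d) (a + c)) := by
          apply measure_mono
          rintro x ⟨⟨h1, h2⟩, hx⟩
          simp only [mem_Icc, not_and, not_le] at hx
          exact ⟨hx (by linarith), h2⟩
       _ = ENNReal.ofReal (c - d) := by rw [Real.volume_Ioc]; ring_nf
       _ = ENNReal.ofReal |c - d| := by rw [abs_of_nonneg (by linarith)]

private lemma stmt16_pi_restrict (n : ℕ) (a : ℝ) :
    Measure.pi (fun _ : Fin n => volume.restrict (Icc (0:ℝ) a))
      = volume.restrict (Set.pi univ fun _ => Icc (0:ℝ) a) := by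
  refine Measure.pi_eq fun t ht => ?_
  rw [Measure.restrict_apply (MeasurableSet.univ_pi ht), ← Set.pi_inter_distrib,
    volume_pi_pi (fun i => t i ∩ Icc (0:ℝ) a)]
  exact Finset.prod_congr rfl fun i _ => (Measure.restrict_apply (ht i)).symm

private lemma stmt16_box_diff (n : ℕ) (a : ℝ) (c d : Fin n → ℝ) :
    volume (Set.pi univ (fun i => Icc (c i) (a + c i))
        \ Set.pi univ (fun i => Icc (d i) (a + d i)))
      ≤ ∑ i, ENNReal.ofReal |c i - d i| * ENNReal.ofReal a ^ (n - 1) := by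
  have hsub : Set.pi univ (fun i => Icc (c i) (a + c i))
        \ Set.pi univ (fun i => Icc (d i) (a + d i))
      ⊆ ⋃ i, Set.pi univ (fun j => if j = i then Icc (c i) (a + c i) \ Icc (d i) (a + d i)
        else Icc (c j) (a + c j)) := by
    rintro x ⟨hx1, hx2⟩
    simp only [Set.mem_univ_pi] at hx1 hx2
    push_neg at hx2
    obtain ⟨i, hi⟩ := hx2
    refine Set.mem_iUnion.2 ⟨i, ?_⟩
    intro j _
    by_cases hj : j = i
    · subst hj; simp only [if_pos rfl]; exact ⟨hx1 j, hi⟩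
    · simp only [if_neg hj]; exact hx1 j
  refine (measure_mono hsub).trans ((measure_iUnion_fintype_le _ _).trans ?_)
  refine Finset.sum_le_sum fun i _ => ?_
  rw [volume_pi_pi]
  rw [← Finset.mul_prod_erase Finset.univ _ (Finset.mem_univ i), if_pos rfl]
  have h2 : ∀ j ∈ Finset.univ.erase i,
      volume (if j = i then Icc (c i) (a + c i) \ Icc (d i) (a + d i)
        else Icc (c j) (a + c j)) ≤ ENNReal.ofReal a := by
    intro j hj
    rw [if_neg (Finset.ne_of_mem_erase hj), Real.volume_Icc]
    simp
  calc volume (Icc (c i) (a + c i) \ Icc (d i) (a + d i)) *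
        ∏ j ∈ Finset.univ.erase i, volume (if j = i then Icc (c i) (a + c i) \ Icc (d i) (a + d i)
          else Icc (c j) (a + c j))
      ≤ ENNReal.ofReal |c i - d i| * ∏ _j ∈ Finset.univ.erase i, ENNReal.ofReal a :=
        mul_le_mul' (stmt16_ivl a (c i) (d i)) (Finset.prod_le_prod' h2)
    _ = ENNReal.ofReal |c i - d i| * ENNReal.ofReal a ^ (n - 1) := by
        rw [Finset.prod_const, Finset.card_erase_of_mem (Finset.mem_univ i)]
        simp

end Aux

/-- Shift-stability of the uniform distribution on the box `[0,a]^n`: for `U` uniform on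
`[0,a]^n`, the total variation distance between the laws of `U` and `U + s` is at most
`(Σᵢ |sᵢ|)/a`, which in particular is at most `n ‖s‖_∞ / a`. -/
theorem stmt_16 (n : ℕ) (hn : 1 ≤ n) (a : ℝ) (ha : 0 < a) (s : Fin n → ℝ) :
    (∀ E : Set (Fin n → ℝ), MeasurableSet E →
      |((((ENNReal.ofReal a) ^ n)⁻¹ •
          Measure.pi fun _ : Fin n => volume.restrict (Set.Icc (0 : ℝ) a)) E).toReal -
        (((((ENNReal.ofReal a) ^ n)⁻¹ •
          Measure.pi fun _ : Fin n => volume.restrict (Set.Icc (0 : ℝ) a)).map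
            (fun u => u + s)) E).toReal|
        ≤ (∑ i, |s i|) / a) ∧
    (∑ i, |s i|) / a ≤ (n : ℝ) * (⨆ i, |s i|) / a := by
  have haE0 : ENNReal.ofReal a ≠ 0 := (ENNReal.ofReal_pos.2 ha).ne'
  have haET : ENNReal.ofReal a ≠ ⊤ := ENNReal.ofReal_ne_top
  set c : ENNReal := ((ENNReal.ofReal a) ^ n)⁻¹ with hc
  have hc_ne_top : c ≠ ⊤ := ENNReal.inv_ne_top.2 (pow_ne_zero n haE0)
  set B : Set (Fin n → ℝ) := Set.pi Set.univ fun _ => Set.Icc (0:ℝ) a with hB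
  set B' : Set (Fin n → ℝ) := Set.pi Set.univ fun i => Set.Icc (s i) (a + s i) with hB'
  have hπ : (Measure.pi fun _ : Fin n => volume.restrict (Set.Icc (0 : ℝ) a))
      = volume.restrict B := stmt16_pi_restrict n a
  have hB'vol : volume B' = (ENNReal.ofReal a) ^ n := by
    rw [hB', volume_pi_pi]
    simp [Real.volume_Icc]
  have hBvol : volume B = (ENNReal.ofReal a) ^ n := by
    rw [hB, volume_pi_pi]
    simp [Real.volume_Icc]
  -- the bound D
  set D : ENNReal := (∑ i, ENNReal.ofReal |s i|) * ENNReal.ofReal a ^ (n - 1) with hD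
  have hD_ne_top : D ≠ ⊤ := by
    rw [hD]
    refine ENNReal.mul_ne_top ?_ (ENNReal.pow_ne_top haET)
    exact ENNReal.sum_ne_top.2 fun i _ => ENNReal.ofReal_ne_top
  have hBB' : volume (B \ B') ≤ D := by
    have := stmt16_box_diff n a (fun _ => 0) s
    simp only [add_zero, zero_sub, abs_neg] at this
    calc volume (B \ B') ≤ ∑ i, ENNReal.ofReal |s i| * ENNReal.ofReal a ^ (n - 1) := this
      _ = D := by rw [hD, Finset.sum_mul]
  have hB'B : volume (B' \ B) ≤ D := by
    have := stmt16_box_diff n a s (fun _ => 0)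
    simp only [add_zero, sub_zero] at this
    calc volume (B' \ B) ≤ ∑ i, ENNReal.ofReal |s i| * ENNReal.ofReal a ^ (n - 1) := this
      _ = D := by rw [hD, Finset.sum_mul]
  -- toReal of c * D
  have hcD_toReal : (c * D).toReal ≤ (∑ i, |s i|) / a := by
    rw [hc, hD, ENNReal.toReal_mul, ENNReal.toReal_inv, ENNReal.toReal_pow,
      ENNReal.toReal_ofReal ha.le, ENNReal.toReal_mul, ENNReal.toReal_pow,
      ENNReal.toReal_ofReal ha.le]
    have hsum : (∑ i, ENNReal.ofReal |s i|).toReal = ∑ i, |s i| := by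
      rw [ENNReal.toReal_sum (fun i _ => ENNReal.ofReal_ne_top)]
      exact Finset.sum_congr rfl fun i _ => ENNReal.toReal_ofReal (abs_nonneg _)
    rw [hsum]
    have hpow : a ^ n = a ^ (n - 1) * a := by
      conv_lhs => rw [← Nat.succ_pred_eq_of_pos hn, pow_succ]
      rw [Nat.pred_eq_sub_one]
    rw [hpow]
    have h1 : (0:ℝ) ≤ ∑ i, |s i| := Finset.sum_nonneg fun i _ => abs_nonneg _
    have h2 : (0:ℝ) < a ^ (n-1) := pow_pos ha _
    rw [div_eq_mul_inv]
    apply le_of_eq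
    field_simp
  constructor
  · intro E hE
    have hmeas : Measurable (fun u : Fin n → ℝ => u + s) := measurable_add_const s
    -- compute the two measures
    have hμ1 : ((c • Measure.pi fun _ : Fin n => volume.restrict (Set.Icc (0 : ℝ) a)) E)
        = c * volume (E ∩ B) := by
      rw [Measure.smul_apply, smul_eq_mul, hπ, Measure.restrict_apply hE]
    have hpre : (fun u : Fin n → ℝ => u + s) ⁻¹' E ∩ B
        = (fun u : Fin n → ℝ => u + s) ⁻¹' (E ∩ B') := by
      ext x
      simp only [Set.mem_inter_iff, Set.mem_preimage, hB, hB', Set.mem_univ_pi, Set.mem_Icc,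
        Pi.add_apply]
      constructor
      · rintro ⟨h1, h2⟩
        exact ⟨h1, fun i => ⟨by linarith [(h2 i).1], by linarith [(h2 i).2]⟩⟩
      · rintro ⟨h1, h2⟩
        exact ⟨h1, fun i => ⟨by linarith [(h2 i).1], by linarith [(h2 i).2]⟩⟩
    have hμ2 : (((c • Measure.pi fun _ : Fin n => volume.restrict (Set.Icc (0 : ℝ) a)).map
        (fun u => u + s)) E) = c * volume (E ∩ B') := by
      rw [Measure.map_apply hmeas hE, Measure.smul_apply, smul_eq_mul, hπ,
        Measure.restrict_apply (hmeas hE), hpre,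
        measure_preimage_add_right volume s (E ∩ B')]
    rw [hμ1, hμ2]
    -- finiteness
    have hfin1 : c * volume (E ∩ B) ≠ ⊤ := by
      refine ENNReal.mul_ne_top hc_ne_top (ne_top_of_le_ne_top ?_
        (measure_mono Set.inter_subset_right))
      rw [hBvol]; exact ENNReal.pow_ne_top haET
    have hfin2 : c * volume (E ∩ B') ≠ ⊤ := by
      refine ENNReal.mul_ne_top hc_ne_top (ne_top_of_le_ne_top ?_
        (measure_mono Set.inter_subset_right))
      rw [hB'vol]; exact ENNReal.pow_ne_top haET
    have hcD_ne_top : c * D ≠ ⊤ := ENNReal.mul_ne_top hc_ne_top hD_ne_top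
    -- mutual bounds
    have key : ∀ (S T G : Set (Fin n → ℝ)), volume (G \ T) ≤ D →
        c * volume (E ∩ S) ≠ ⊤ → c * volume (E ∩ T) ≠ ⊤ →
        E ∩ S ⊆ (E ∩ T) ∪ (G \ T) → S ⊆ G →
        (c * volume (E ∩ S)).toReal - (c * volume (E ∩ T)).toReal ≤ (∑ i, |s i|) / a := by
      intro S T G hGT hS hT hsub _
      have h1 : volume (E ∩ S) ≤ volume (E ∩ T) + D :=
        (measure_mono hsub).trans ((measure_union_le _ _).trans (by gcongr))
      have h2 : c * volume (E ∩ S) ≤ c * volume (E ∩ T) + c * D := by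
        calc c * volume (E ∩ S) ≤ c * (volume (E ∩ T) + D) := by gcongr
          _ = c * volume (E ∩ T) + c * D := mul_add _ _ _
      have h3 := ENNReal.toReal_mono (by
        exact ENNReal.add_ne_top.2 ⟨hT, hcD_ne_top⟩) h2
      rw [ENNReal.toReal_add hT hcD_ne_top] at h3
      linarith [hcD_toReal]
    rw [abs_sub_le_iff]
    constructor
    · refine key B B' B hBB' hfin1 hfin2 ?_ subset_rfl
      rintro x ⟨hxE, hxB⟩
      by_cases h : x ∈ B'
      · exact Or.inl ⟨hxE, h⟩
      · exact Or.inr ⟨hxB, h⟩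
    · refine key B' B B' hB'B hfin2 hfin1 ?_ subset_rfl
      rintro x ⟨hxE, hxB'⟩
      by_cases h : x ∈ B
      · exact Or.inl ⟨hxE, h⟩
      · exact Or.inr ⟨hxB', h⟩
  · have hne : Nonempty (Fin n) := ⟨⟨0, hn⟩⟩
    have hbdd : BddAbove (Set.range fun i => |s i|) := (Set.finite_range _).bddAbove
    have hsum : (∑ i, |s i|) ≤ (n : ℝ) * (⨆ i, |s i|) := by
      calc (∑ i, |s i|) ≤ ∑ _i : Fin n, (⨆ j, |s j|) :=
            Finset.sum_le_sum fun i _ => le_ciSup hbdd i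
        _ = (n : ℝ) * (⨆ i, |s i|) := by
            rw [Finset.sum_const, Finset.card_univ, Fintype.card_fin, nsmul_eq_mul]
    exact div_le_div_of_nonneg_right hsum ha.le
end

section
/- Let k ≥ 2 be an even integer and let Δ ≥ 4k be a power of 2 such that Δ/k is a power of 2 and log₂(Δ/k) ≥ 1. Define the measure A on ℤ assigning mass 2 to each of the points 2jΔ/k for j = 1, …, k/2 (and mass 0 elsewhere). Let 𝒞 be any family of finitely supported nonnegative measures on ℤ, each of total mass k and support size at most k, such that every finitely supported nonnegative measure B on ℤ with total mass k, support size at most k, and EMD(A, B) ≤ k/2 satisfies EMD(B, c) ≤ k/200 for some c ∈ 𝒞. Then |𝒞| ≥ (log₂(Δ/k))^{9k/20} / 2^k. -/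
open scoped Classical

/-- Earth Mover's Distance between two finitely supported nonnegative measures on `ℤ`
of equal total mass: the infimum over finitely supported couplings `π` (with row
marginals `y` and column marginals `y'`) of `Σ_{i,j} π(i,j) |i − j|`. -/
noncomputable def EMDZ (y y' : ℤ →₀ ℝ) : ℝ :=
  sInf {c : ℝ | ∃ π : (ℤ × ℤ) →₀ ℝ,
    (∀ p, 0 ≤ π p) ∧
    (∀ i : ℤ, (π.sum fun p v => if p.1 = i then v else 0) = y i) ∧
    (∀ j : ℤ, (π.sum fun p v => if p.2 = j then v else 0) = y' j) ∧
    c = π.sum fun p v => v * |(p.1 : ℝ) - (p.2 : ℝ)|}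

/-!
For `t : Fin (k/2) → Fin b`, where `Δ = k·2^b`, let `B_t` keep the mass `2` of `A` at each
point `p_j = 2jΔ/k`, except that a fraction `2^(-t_j)` of it is moved to `p_j + 2^(t_j)`.
Each move costs `1`, so `EMD(A, B_t) ≤ k/2`, and there are `b^(k/2)` such measures.

If `t` and `t'` differ on the blocks `D`, the maximum of `0` and of the tents of height
`2^(t_j)/2` centred at `p_j + 2^(t_j)`, `j ∈ D`, is `1`-Lipschitz, vanishes on the support of
`B_t'` (the blocks are `2Δ/k` apart) and integrates to at least `|D|/2` against `B_t`. By weak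
duality `|D|/2 ≤ EMD(B_t, c) + EMD(B_t', c)`, so one ball of radius `k/200` meets only measures
`B_t` whose indices are within Hamming distance `k/50` of each other, that is, at most
`2^(k/2) b^(k/50)` of them. Hence `|𝒞| ≥ b^(k/2 - k/50) / 2^(k/2) ≥ b^(9k/20) / 2^k`, and
`b = log₂(Δ/k)`.
-/

open Finsupp

namespace Finsupp

variable {α β M : Type*} [AddCommMonoid M]

lemma mapDomain_apply_eq_sum_ite [DecidableEq β] (f : α → β) (v : α →₀ M) (b : β) :
    v.mapDomain f b = v.sum fun a x => if f a = b then x else 0 := by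
  simp [mapDomain, Finsupp.sum_apply, single_apply]

lemma mapDomain_const (v : α →₀ M) (b : β) :
    v.mapDomain (Function.const α b) = single b (v.sum fun _ x => x) := by
  simp [mapDomain, sum, single_finsetSum]

lemma eq_zero_of_nonneg_of_sum_eq_zero [PartialOrder M] [IsOrderedAddMonoid M] {v : α →₀ M}
    (hv : ∀ a, 0 ≤ v a) (h : (v.sum fun _ x => x) = 0) : v = 0 := by
  ext a
  by_contra ha
  exact ha ((Finset.sum_eq_zero_iff_of_nonneg fun a _ => hv a).1 h a (mem_support_iff.2 ha))

lemma sum_coe_sort_single_apply [DecidableEq β] {s : Finset α} {q : α → β} (hq : Set.InjOn q s)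
    (m : M) (z : β) :
    (∑ j : s, single (q j) m) z = if z ∈ s.image q then m else 0 := by
  rw [Finset.sum_coe_sort s fun j => single (q j) m, ← Finset.sum_image (f := (single · m)) hq,
    finsetSum_apply]
  simp [single_apply]

end Finsupp

section Coupling

variable {α β : Type*}

def IsCoupling (π : α × β →₀ ℝ) (y : α →₀ ℝ) (y' : β →₀ ℝ) : Prop :=
  (∀ p, 0 ≤ π p) ∧ π.mapDomain Prod.fst = y ∧ π.mapDomain Prod.snd = y'

lemma exists_isCoupling {y : α →₀ ℝ} {y' : β →₀ ℝ} (hy : ∀ a, 0 ≤ y a) (hy' : ∀ b, 0 ≤ y' b)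
    (hmass : (y.sum fun _ x => x) = y'.sum fun _ x => x) : ∃ π, IsCoupling π y y' := by
  have hm₀ : 0 ≤ y'.sum fun _ x => x := Finset.sum_nonneg fun b _ => hy' b
  set m := y'.sum fun _ x => x
  rcases hm₀.eq_or_lt with hm | hm
  · refine ⟨0, fun _ => le_rfl, ?_, ?_⟩
    · rw [mapDomain_zero, eq_zero_of_nonneg_of_sum_eq_zero hy (hmass.trans hm.symm)]
    · rw [mapDomain_zero, eq_zero_of_nonneg_of_sum_eq_zero hy' hm.symm]
  -- the product coupling `y ⊗ y' / m`
  refine ⟨y.sum fun a u => (u / m) • y'.mapDomain (Prod.mk a), fun q => ?_, ?_, ?_⟩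
  · rw [Finsupp.sum_apply]
    exact Finset.sum_nonneg fun a _ =>
      mul_nonneg (div_nonneg (hy a) hm.le) (Finsupp.le_def.1 (mapDomain_nonneg hy') q)
  · rw [Finsupp.sum, mapDomain_finsetSum]
    conv_rhs => rw [← sum_single y]
    refine Finset.sum_congr rfl fun a _ => ?_
    rw [mapDomain_smul, ← mapDomain_comp, Prod.fst_comp_mk, mapDomain_const, smul_single,
      smul_eq_mul, div_mul_cancel₀ _ hm.ne']
  · rw [Finsupp.sum, mapDomain_finsetSum]
    simp only [mapDomain_smul, ← mapDomain_comp, Prod.snd_comp_mk, mapDomain_id]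
    have hsum : ∑ a ∈ y.support, y a / m = 1 := by
      rw [← Finset.sum_div, div_eq_one_iff_eq hm.ne']
      exact hmass
    rw [← Finset.sum_smul, hsum, one_smul]

end Coupling

section EarthMover

noncomputable def transportCost (π : ℤ × ℤ →₀ ℝ) : ℝ :=
  linearCombination ℝ (fun p => dist p.1 p.2) π

lemma EMDZ_eq_sInf (y y' : ℤ →₀ ℝ) :
    EMDZ y y' = sInf (transportCost '' {π | IsCoupling π y y'}) := by
  unfold EMDZ
  congr 1
  ext c
  simp only [Set.mem_ofPred_eq, Set.mem_image, IsCoupling, transportCost, linearCombination_apply,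
    Int.dist_eq, smul_eq_mul, Finsupp.ext_iff, mapDomain_apply_eq_sum_ite]
  exact exists_congr fun π => by tauto

lemma EMDZ_le_transportCost {π : ℤ × ℤ →₀ ℝ} {y y' : ℤ →₀ ℝ} (h : IsCoupling π y y') :
    EMDZ y y' ≤ transportCost π := by
  rw [EMDZ_eq_sInf]
  refine csInf_le ⟨0, ?_⟩ ⟨π, h, rfl⟩
  rintro _ ⟨ρ, hρ, rfl⟩
  exact Finset.sum_nonneg fun q _ => mul_nonneg (hρ.1 q) dist_nonneg

lemma abs_sub_le_transportCost {π : ℤ × ℤ →₀ ℝ} {y y' : ℤ →₀ ℝ} (h : IsCoupling π y y')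
    {F : ℤ → ℝ} (hF : LipschitzWith 1 F) :
    |linearCombination ℝ F y - linearCombination ℝ F y'| ≤ transportCost π := by
  obtain ⟨hπ, rfl, rfl⟩ := h
  rw [linearCombination_mapDomain, linearCombination_mapDomain]
  simp only [transportCost, linearCombination_apply, Finsupp.sum,
    ← Finset.sum_sub_distrib, ← smul_sub]
  refine (Finset.abs_sum_le_sum_abs _ _).trans (Finset.sum_le_sum fun q _ => ?_)
  rw [abs_smul, abs_of_nonneg (hπ q), smul_eq_mul, smul_eq_mul]
  exact mul_le_mul_of_nonneg_left
    (by simpa [Real.dist_eq] using hF.dist_le_mul q.1 q.2) (hπ q)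

lemma abs_sub_le_EMDZ {y y' : ℤ →₀ ℝ} (hy : ∀ z, 0 ≤ y z) (hy' : ∀ z, 0 ≤ y' z)
    (hmass : (y.sum fun _ x => x) = y'.sum fun _ x => x) {F : ℤ → ℝ} (hF : LipschitzWith 1 F) :
    |linearCombination ℝ F y - linearCombination ℝ F y'| ≤ EMDZ y y' := by
  obtain ⟨π₀, hπ₀⟩ := exists_isCoupling hy hy' hmass
  rw [EMDZ_eq_sInf]
  refine le_csInf ⟨_, π₀, hπ₀, rfl⟩ ?_
  rintro _ ⟨π, hπ, rfl⟩
  exact abs_sub_le_transportCost hπ hF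

end EarthMover

theorem LipschitzWith.finset_fold_max {ι α : Type*} [PseudoEMetricSpace α] {K : NNReal}
    {s : Finset ι} {f : ι → α → ℝ} (hf : ∀ i ∈ s, LipschitzWith K (f i)) (b : ℝ) :
    LipschitzWith K fun x => s.fold max b (f · x) := by
  classical
  induction s using Finset.induction_on with
  | empty => simpa using LipschitzWith.const' b
  | insert i s hi ih =>
    simp only [Finset.fold_insert hi]
    simpa using (hf i (Finset.mem_insert_self i s)).max
      (ih fun j hj => hf j (Finset.mem_insert_of_mem hj))

section Tent

variable {ι α : Type*} [PseudoMetricSpace α] (s : Finset ι) (c : ι → α) (h : ι → ℝ)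

noncomputable def tentMax (z : α) : ℝ :=
  s.fold max 0 fun j => h j - dist z (c j)

lemma lipschitzWith_tentMax : LipschitzWith 1 (tentMax s c h) :=
  LipschitzWith.finset_fold_max (fun j _ => LipschitzWith.of_dist_le_mul fun x y => by
    rw [Real.dist_eq, sub_sub_sub_cancel_left, abs_sub_comm, NNReal.coe_one, one_mul]
    exact abs_dist_sub_le x y (c j)) 0

lemma tentMax_nonneg (z : α) : 0 ≤ tentMax s c h z :=
  (Finset.le_fold_max _).2 (Or.inl le_rfl)

variable {s c h}

lemma le_tentMax_center {j : ι} (hj : j ∈ s) : h j ≤ tentMax s c h (c j) :=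
  (Finset.le_fold_max _).2 (Or.inr ⟨j, hj, by simp⟩)

lemma tentMax_eq_zero {z : α} (hz : ∀ j ∈ s, h j ≤ dist z (c j)) : tentMax s c h z = 0 :=
  le_antisymm ((Finset.fold_max_le _).2 ⟨le_rfl, fun j hj => sub_nonpos.2 (hz j hj)⟩)
    (tentMax_nonneg s c h z)

end Tent

section Hamming

variable {ι β : Type*} [Fintype ι] [DecidableEq ι] [Fintype β] [DecidableEq β]

lemma card_hammingBall_le [Nonempty β] (t₀ : ι → β) (r : ℕ) :
    (Finset.univ.filter fun t => hammingDist t t₀ ≤ r).card ≤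
      2 ^ Fintype.card ι * Fintype.card β ^ r := by
  set T := Finset.univ.filter fun S : Finset ι => S.card ≤ r
  set U : Finset ι → Finset (ι → β) := fun S => Finset.univ.filter fun t => ∀ j ∉ S, t j = t₀ j
  have hU : ∀ S ∈ T, (U S).card ≤ Fintype.card β ^ r := by
    intro S hS
    calc (U S).card ≤ (Finset.univ : Finset (S → β)).card :=
          Finset.card_le_card_of_injOn (fun t (j : S) => t j) (fun _ _ => Finset.mem_univ _)
            fun t₁ h₁ t₂ h₂ h => funext fun j => by
              by_cases hj : j ∈ S
              · exact congrFun h ⟨j, hj⟩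
              · rw [(Finset.mem_filter.1 h₁).2 j hj, (Finset.mem_filter.1 h₂).2 j hj]
      _ = Fintype.card β ^ S.card := by simp
      _ ≤ Fintype.card β ^ r :=
          Nat.pow_le_pow_right Fintype.card_pos (Finset.mem_filter.1 hS).2
  calc _ ≤ (T.biUnion U).card := by
        refine Finset.card_le_card fun t ht => Finset.mem_biUnion.2
          ⟨Finset.univ.filter fun j => t j ≠ t₀ j, ?_, ?_⟩
        · exact Finset.mem_filter.2 ⟨Finset.mem_univ _, (Finset.mem_filter.1 ht).2⟩
        · simp [U]
    _ ≤ ∑ S ∈ T, (U S).card := Finset.card_biUnion_le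
    _ ≤ T.card * Fintype.card β ^ r := Finset.sum_le_card_nsmul _ _ _ hU
    _ ≤ 2 ^ Fintype.card ι * Fintype.card β ^ r := by
        gcongr
        exact (Finset.card_filter_le _ _).trans_eq (by simp)

lemma card_pow_le_of_hammingDist_le [Nonempty β] {γ : Type*} [DecidableEq γ]
    (φ : (ι → β) → γ) (s : Finset γ) (hφs : ∀ t, φ t ∈ s) {r : ℕ}
    (hφ : ∀ t t', φ t = φ t' → hammingDist t t' ≤ r) :
    Fintype.card β ^ Fintype.card ι ≤ 2 ^ Fintype.card ι * Fintype.card β ^ r * s.card := by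
  have := Finset.card_le_mul_card_image (f := φ) Finset.univ
    (2 ^ Fintype.card ι * Fintype.card β ^ r) fun c hc => by
      obtain ⟨t₀, -, rfl⟩ := Finset.mem_image.1 hc
      exact (Finset.card_le_card fun t ht => Finset.mem_filter.2
        ⟨Finset.mem_univ _, hφ t t₀ (Finset.mem_filter.1 ht).2⟩).trans (card_hammingBall_le t₀ r)
  rw [Finset.card_univ, Fintype.card_fun] at this
  exact this.trans (Nat.mul_le_mul_left _ (Finset.card_le_card
    (Finset.image_subset_iff.2 fun t _ => hφs t)))

end Hamming

lemma inv_two_pow_le_one (n : ℕ) : ((2 : ℝ) ^ n)⁻¹ ≤ 1 :=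
  inv_le_one_of_one_le₀ (one_le_pow₀ one_le_two)

section SplitMeasure

variable {ι : Type*} [Fintype ι] {b : ℕ} (p : ι → ℤ) (t : ι → Fin b)

noncomputable def splitMeasure : ℤ →₀ ℝ :=
  ∑ j, (single (p j) (2 - (2 ^ (t j : ℕ))⁻¹) + single (p j + 2 ^ (t j : ℕ)) (2 ^ (t j : ℕ))⁻¹)

noncomputable def splitCoupling : ℤ × ℤ →₀ ℝ :=
  ∑ j, (single (p j, p j) (2 - (2 ^ (t j : ℕ))⁻¹) +
    single (p j, p j + 2 ^ (t j : ℕ)) (2 ^ (t j : ℕ))⁻¹)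

lemma isCoupling_splitCoupling :
    IsCoupling (splitCoupling p t) (∑ j, single (p j) 2) (splitMeasure p t) := by
  refine ⟨fun q => ?_, ?_, ?_⟩
  · simp only [splitCoupling, finsetSum_apply, Finsupp.add_apply, single_apply]
    refine Finset.sum_nonneg fun j _ => add_nonneg (ite_nonneg ?_ le_rfl) (ite_nonneg ?_ le_rfl)
    · linarith [inv_two_pow_le_one (t j)]
    · positivity
  · simp only [splitCoupling, mapDomain_finsetSum, mapDomain_add, mapDomain_single, ← single_add,
      sub_add_cancel]
  · simp only [splitCoupling, splitMeasure, mapDomain_finsetSum, mapDomain_add, mapDomain_single]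

lemma transportCost_splitCoupling : transportCost (splitCoupling p t) = Fintype.card ι := by
  simp [transportCost, splitCoupling, Int.dist_eq]

lemma EMDZ_splitMeasure_le : EMDZ (∑ j, single (p j) 2) (splitMeasure p t) ≤ Fintype.card ι :=
  (EMDZ_le_transportCost (isCoupling_splitCoupling p t)).trans_eq (transportCost_splitCoupling p t)

lemma splitMeasure_nonneg (z : ℤ) : 0 ≤ splitMeasure p t z := by
  rw [← (isCoupling_splitCoupling p t).2.2]
  exact Finsupp.le_def.1 (mapDomain_nonneg (isCoupling_splitCoupling p t).1) z

lemma sum_splitMeasure : ((splitMeasure p t).sum fun _ x => x) = 2 * Fintype.card ι := by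
  rw [splitMeasure, ← sum_finsetSum_index (fun _ => rfl) (fun _ _ _ => rfl)]
  simp only [sum_add_index' (h := fun _ x => x) (fun _ => rfl) (fun _ _ _ => rfl),
    sum_single_index (h := fun _ x => x) rfl, sub_add_cancel]
  simp [mul_comm]

lemma card_support_splitMeasure_le : (splitMeasure p t).support.card ≤ 2 * Fintype.card ι := by
  calc (splitMeasure p t).support.card
      ≤ (Finset.univ.biUnion fun j => {p j, p j + 2 ^ (t j : ℕ)}).card := by
        refine Finset.card_le_card (support_finsetSum.trans (Finset.biUnion_mono fun j _ => ?_))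
        exact support_add.trans (Finset.union_subset_union support_single_subset
          support_single_subset)
    _ ≤ ∑ j : ι, ({p j, p j + 2 ^ (t j : ℕ)} : Finset ℤ).card := Finset.card_biUnion_le
    _ ≤ ∑ _j : ι, 2 := Finset.sum_le_sum fun j _ => Finset.card_le_two
    _ = 2 * Fintype.card ι := by simp [mul_comm]

lemma linearCombination_splitMeasure (F : ℤ → ℝ) :
    linearCombination ℝ F (splitMeasure p t) =
      ∑ j, ((2 - (2 ^ (t j : ℕ))⁻¹) * F (p j) + (2 ^ (t j : ℕ))⁻¹ * F (p j + 2 ^ (t j : ℕ))) := by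
  simp [splitMeasure, sub_mul]

end SplitMeasure

lemma two_pow_le_two_mul_abs_two_pow_sub {m n : ℕ} (h : m ≠ n) :
    (2 : ℝ) ^ n ≤ 2 * |2 ^ m - 2 ^ n| := by
  rcases h.lt_or_gt with h | h
  · have : (2 : ℝ) ^ (m + 1) ≤ 2 ^ n := pow_le_pow_right₀ one_le_two h
    rw [pow_succ] at this
    rw [abs_sub_comm, abs_of_nonneg (by linarith [pow_pos (two_pos (α := ℝ)) m])]
    linarith
  · have : (2 : ℝ) ^ (n + 1) ≤ 2 ^ m := pow_le_pow_right₀ one_le_two h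
    rw [pow_succ] at this
    rw [abs_of_nonneg (by linarith [pow_pos (two_pos (α := ℝ)) n])]
    linarith [pow_pos (two_pos (α := ℝ)) n]

lemma two_pow_le_dist_of_separated {ι : Type*} {b : ℕ} {p : ι → ℤ}
    (hp : Pairwise fun i j => (2 : ℤ) ^ (b + 1) ≤ |p i - p j|)
    {i j : ι} (hij : i ≠ j) {x y : ℤ}
    (hx : p i ≤ x ∧ x ≤ p i + 2 ^ b) (hy : p j ≤ y ∧ y ≤ p j + 2 ^ b) :
    (2 : ℝ) ^ b ≤ dist x y := by
  have hsep := hp hij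
  rw [pow_succ] at hsep
  suffices (2 : ℤ) ^ b ≤ |x - y| by rw [Int.dist_eq']; exact_mod_cast this
  rw [le_abs']
  rcases le_abs'.1 hsep with h | h <;> [left; right] <;> linarith

section SplitPotential

variable {ι : Type*} [Fintype ι] {b : ℕ} (p : ι → ℤ)

noncomputable def splitPotential (t t' : ι → Fin b) : ℤ → ℝ :=
  tentMax {j | t j ≠ t' j} (fun j => p j + 2 ^ (t j : ℕ)) (fun j => 2 ^ (t j : ℕ) / 2)

lemma lipschitzWith_splitPotential (t t' : ι → Fin b) :
    LipschitzWith 1 (splitPotential p t t') :=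
  lipschitzWith_tentMax _ _ _

lemma splitPotential_nonneg (t t' : ι → Fin b) (z : ℤ) : 0 ≤ splitPotential p t t' z :=
  tentMax_nonneg _ _ _ z

lemma le_splitPotential {t t' : ι → Fin b} {j : ι} (hj : t j ≠ t' j) :
    (2 : ℝ) ^ (t j : ℕ) / 2 ≤ splitPotential p t t' (p j + 2 ^ (t j : ℕ)) :=
  le_tentMax_center (c := fun j => p j + 2 ^ (t j : ℕ)) (h := fun j => (2 : ℝ) ^ (t j : ℕ) / 2)
    (Finset.mem_filter.2 ⟨Finset.mem_univ j, hj⟩)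

lemma hammingDist_div_two_le_linearCombination_splitPotential (t t' : ι → Fin b) :
    (hammingDist t t' : ℝ) / 2 ≤
      linearCombination ℝ (splitPotential p t t') (splitMeasure p t) := by
  rw [linearCombination_splitMeasure, hammingDist, Finset.card_eq_sum_ones, Nat.cast_sum,
    Finset.sum_div]
  have hw : ∀ j, 0 ≤ 2 - ((2 : ℝ) ^ (t j : ℕ))⁻¹ := fun j => by
    linarith [inv_two_pow_le_one (t j : ℕ)]
  have hG := splitPotential_nonneg p t t'
  refine (Finset.sum_le_sum fun j hj => ?_).trans
    (Finset.sum_le_sum_of_subset_of_nonneg (Finset.subset_univ _) fun j _ _ => ?_)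
  · have hc := mul_le_mul_of_nonneg_left (le_splitPotential p (Finset.mem_filter.1 hj).2)
      (inv_nonneg.2 (pow_nonneg zero_le_two (t j : ℕ)))
    rw [mul_div_assoc', inv_mul_cancel₀ (pow_ne_zero _ two_ne_zero)] at hc
    have := mul_nonneg (hw j) (hG (p j))
    push_cast
    linarith
  · exact add_nonneg (mul_nonneg (hw j) (hG _)) (mul_nonneg (by positivity) (hG _))

variable {p} (hp : Pairwise fun i j => (2 : ℤ) ^ (b + 1) ≤ |p i - p j|)
include hp

lemma splitPotential_eq_zero {t t' : ι → Fin b} (j : ι) :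
    splitPotential p t t' (p j) = 0 ∧ splitPotential p t t' (p j + 2 ^ (t' j : ℕ)) = 0 := by
  have hcell : ∀ i (s : Fin b), p i ≤ p i + 2 ^ (s : ℕ) ∧ p i + 2 ^ (s : ℕ) ≤ p i + 2 ^ b :=
    fun i s => ⟨by linarith [pow_pos (two_pos (α := ℤ)) s],
      by linarith [pow_le_pow_right₀ (one_le_two (α := ℤ)) s.isLt.le]⟩
  have hfar : ∀ i ≠ j, ∀ z, p j ≤ z ∧ z ≤ p j + 2 ^ b →
      (2 : ℝ) ^ (t i : ℕ) / 2 ≤ dist z (p i + 2 ^ (t i : ℕ)) := fun i hij z hz => by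
    have := two_pow_le_dist_of_separated hp (Ne.symm hij) hz (hcell i (t i))
    have : (2 : ℝ) ^ (t i : ℕ) ≤ 2 ^ b := pow_le_pow_right₀ one_le_two (t i).isLt.le
    linarith [pow_pos (two_pos (α := ℝ)) (t i : ℕ)]
  constructor <;> refine tentMax_eq_zero fun i hi => ?_
  · rcases eq_or_ne i j with rfl | hij
    · rw [Int.dist_eq]; push_cast
      rw [sub_add_cancel_left, abs_neg, abs_of_pos (by positivity)]
      linarith [pow_pos (two_pos (α := ℝ)) (t i : ℕ)]
    · exact hfar i hij _ ⟨le_rfl, by linarith [pow_pos (two_pos (α := ℤ)) b]⟩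
  · rcases eq_or_ne i j with rfl | hij
    · have hne : (t' i : ℕ) ≠ t i := fun h => (Finset.mem_filter.1 hi).2 (Fin.ext h).symm
      rw [Int.dist_eq]; push_cast
      rw [add_sub_add_left_eq_sub]
      linarith [two_pow_le_two_mul_abs_two_pow_sub (n := (t i : ℕ)) hne]
    · exact hfar i hij _ (hcell j (t' j))

lemma linearCombination_splitPotential_eq_zero (t t' : ι → Fin b) :
    linearCombination ℝ (splitPotential p t t') (splitMeasure p t') = 0 := by
  rw [linearCombination_splitMeasure]
  refine Finset.sum_eq_zero fun j _ => ?_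
  rw [(splitPotential_eq_zero hp j).1, (splitPotential_eq_zero hp j).2, mul_zero, mul_zero,
    add_zero]

lemma hammingDist_le_of_EMDZ_le {t t' : ι → Fin b} {c : ℤ →₀ ℝ} (hc : ∀ z, 0 ≤ c z)
    (hcmass : (c.sum fun _ x => x) = 2 * Fintype.card ι) {R : ℝ}
    (ht : EMDZ (splitMeasure p t) c ≤ R) (ht' : EMDZ (splitMeasure p t') c ≤ R) :
    (hammingDist t t' : ℝ) ≤ 4 * R := by
  have hmass : ∀ s : ι → Fin b, ((splitMeasure p s).sum fun _ x => x) = c.sum fun _ x => x :=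
    fun s => (sum_splitMeasure p s).trans hcmass.symm
  have h := abs_le.1 <| abs_sub_le_EMDZ (splitMeasure_nonneg p t) hc (hmass t)
    (lipschitzWith_splitPotential p t t')
  have h' := abs_le.1 <| abs_sub_le_EMDZ (splitMeasure_nonneg p t') hc (hmass t')
    (lipschitzWith_splitPotential p t t')
  have := hammingDist_div_two_le_linearCombination_splitPotential p t t'
  rw [linearCombination_splitPotential_eq_zero hp] at h'
  linarith [h.2, h'.1]

lemma card_pow_le_of_covers [DecidableEq ι] [NeZero b] (𝒞 : Finset (ℤ →₀ ℝ))
    (h𝒞 : ∀ c ∈ 𝒞, (∀ z, 0 ≤ c z) ∧ (c.sum fun _ x => x) = 2 * Fintype.card ι) {R : ℝ}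
    (hcover : ∀ t : ι → Fin b, ∃ c ∈ 𝒞, EMDZ (splitMeasure p t) c ≤ R) :
    b ^ Fintype.card ι ≤ 2 ^ Fintype.card ι * b ^ ⌊4 * R⌋₊ * 𝒞.card := by
  choose φ hφ𝒞 hφ using hcover
  simpa using card_pow_le_of_hammingDist_le φ 𝒞 hφ𝒞 fun t t' h => Nat.le_floor <|
    hammingDist_le_of_EMDZ_le hp (h𝒞 _ (hφ𝒞 t)).1 (h𝒞 _ (hφ𝒞 t)).2 (hφ t) (h ▸ hφ t')

end SplitPotential

lemma pairwise_two_pow_le_abs_sub (b : ℕ) (s : Finset ℕ) :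
    Pairwise fun i j : s =>
      (2 : ℤ) ^ (b + 1) ≤ |((2 * i * 2 ^ b : ℕ) : ℤ) - ((2 * j * 2 ^ b : ℕ) : ℤ)| := by
  intro i j hij
  have hij' : (1 : ℤ) ≤ |(i : ℤ) - j| :=
    Int.one_le_abs (sub_ne_zero.2 (by exact_mod_cast Subtype.coe_ne_coe.2 hij))
  calc (2 : ℤ) ^ (b + 1) = 2 ^ (b + 1) * 1 := (mul_one _).symm
    _ ≤ 2 ^ (b + 1) * |(i : ℤ) - j| := by gcongr
    _ = _ := by
      rw [← abs_of_pos (pow_pos two_pos (b + 1) : (0 : ℤ) < 2 ^ (b + 1)), ← abs_mul]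
      push_cast
      ring_nf

lemma rpow_div_two_pow_le_of_pow_le {b k n C : ℕ} (hb : 1 ≤ b) (hkn : k = 2 * n)
    (h : b ^ n ≤ 2 ^ n * b ^ ⌊4 * ((k : ℝ) / 200)⌋₊ * C) :
    (b : ℝ) ^ (9 * (k : ℝ) / 20) / 2 ^ k ≤ C := by
  set r := ⌊4 * ((k : ℝ) / 200)⌋₊
  have hr : (r : ℝ) ≤ 4 * ((k : ℝ) / 200) := Nat.floor_le (by positivity)
  have hrn : r ≤ n := by
    have : (r : ℝ) ≤ n := by rw [hkn] at hr; push_cast at hr; linarith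
    exact_mod_cast this
  have hexp : (b : ℝ) ^ (9 * (k : ℝ) / 20) ≤ (b : ℝ) ^ (n - r) := by
    rw [← Real.rpow_natCast, Nat.cast_sub hrn]
    refine Real.rpow_le_rpow_of_exponent_le (by exact_mod_cast hb) ?_
    rw [hkn] at hr ⊢
    push_cast at hr ⊢
    linarith
  have hcancel : b ^ (n - r) ≤ 2 ^ n * C := by
    refine Nat.le_of_mul_le_mul_right ?_ (pow_pos hb r)
    rw [← pow_add, Nat.sub_add_cancel hrn]
    linarith
  have h2 : (2 : ℝ) ^ n ≤ 2 ^ k := pow_le_pow_right₀ one_le_two (by omega)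
  rw [div_le_iff₀ (by positivity)]
  calc (b : ℝ) ^ (9 * (k : ℝ) / 20) ≤ (b : ℝ) ^ (n - r) := hexp
    _ ≤ 2 ^ n * C := by exact_mod_cast hcancel
    _ ≤ C * 2 ^ k := by rw [mul_comm]; gcongr

theorem stmt_17_general (k Δ : ℕ) (hk2 : 2 ≤ k) (hkeven : Even k)
    (hdiv : ∃ b : ℕ, 1 ≤ b ∧ Δ = k * 2 ^ b)
    (A : ℤ →₀ ℝ)
    (hA : ∀ z : ℤ, A z =
      if z ∈ (Finset.Icc 1 (k / 2)).image (fun j : ℕ => ((2 * j * (Δ / k) : ℕ) : ℤ))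
        then 2 else 0)
    (𝒞 : Finset (ℤ →₀ ℝ))
    (h𝒞 : ∀ c ∈ 𝒞, (∀ z, 0 ≤ c z) ∧ (c.sum fun _ v => v) = (k : ℝ) ∧
      c.support.card ≤ k)
    (hcover : ∀ B : ℤ →₀ ℝ, (∀ z, 0 ≤ B z) → (B.sum fun _ v => v) = (k : ℝ) →
      B.support.card ≤ k → EMDZ A B ≤ (k : ℝ) / 2 →
      ∃ c ∈ 𝒞, EMDZ B c ≤ (k : ℝ) / 200) :
    (Real.logb 2 ((Δ : ℝ) / k)) ^ ((9 * (k : ℝ)) / 20) / 2 ^ k ≤ (𝒞.card : ℝ) := by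
  obtain ⟨b, hb, rfl⟩ := hdiv
  have : NeZero b := ⟨by omega⟩
  rw [Nat.mul_div_cancel_left _ (by omega)] at hA
  set q : ℕ → ℤ := fun j => ((2 * j * 2 ^ b : ℕ) : ℤ)
  set p : Finset.Icc 1 (k / 2) → ℤ := fun j => q j
  have hA' : A = ∑ j, single (p j) 2 := by
    ext z
    rw [hA]
    exact (sum_coe_sort_single_apply (fun i _ j _ h => by simpa [q] using h) _ z).symm
  have hcard : Fintype.card (Finset.Icc 1 (k / 2)) = k / 2 := by simp
  have hk : 2 * ((k / 2 : ℕ) : ℝ) = k := by exact_mod_cast Nat.two_mul_div_two_of_even hkeven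
  have hcount := card_pow_le_of_covers (pairwise_two_pow_le_abs_sub b _) 𝒞 (R := (k : ℝ) / 200)
    (fun c hc => ⟨(h𝒞 c hc).1, by rw [(h𝒞 c hc).2.1, hcard, hk]⟩)
    fun t => hcover _ (splitMeasure_nonneg p t) (by rw [sum_splitMeasure, hcard, hk])
      ((card_support_splitMeasure_le p t).trans (by rw [hcard]; omega))
      (by rw [hA']; exact (EMDZ_splitMeasure_le p t).trans (by rw [hcard]; linarith))
  rw [hcard] at hcount
  have hlog : Real.logb 2 (((k * 2 ^ b : ℕ) : ℝ) / k) = b := by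
    rw [Nat.cast_mul, mul_div_cancel_left₀ _ (by positivity), Nat.cast_pow, Nat.cast_ofNat,
      Real.logb_pow, Real.logb_self_eq_one one_lt_two, mul_one]
  rw [hlog]
  exact rpow_div_two_pow_le_of_pow_le hb (Nat.two_mul_div_two_of_even hkeven).symm hcount

/-- Covering/doubling lower bound for `k`-sparse measures on the line under EMD:
with `A` placing mass `2` at each point `2jΔ/k`, `j = 1, …, k/2`, any family `𝒞` of
nonnegative measures of total mass `k` and support size at most `k` whose `EMD`-balls of
radius `k/200` cover the `EMD`-ball of radius `k/2` around `A` (within measures of total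
mass `k` and support size at most `k`) must satisfy
`|𝒞| ≥ (log₂(Δ/k))^{9k/20} / 2^k`. -/
theorem stmt_17 (k Δ : ℕ) (hk2 : 2 ≤ k) (hkeven : Even k)
    (hΔpow : ∃ a : ℕ, Δ = 2 ^ a)
    (hdiv : ∃ b : ℕ, 1 ≤ b ∧ Δ = k * 2 ^ b)
    (hΔ4k : 4 * k ≤ Δ)
    (A : ℤ →₀ ℝ)
    (hA : ∀ z : ℤ, A z =
      if z ∈ (Finset.Icc 1 (k / 2)).image (fun j : ℕ => ((2 * j * (Δ / k) : ℕ) : ℤ))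
        then 2 else 0)
    (𝒞 : Finset (ℤ →₀ ℝ))
    (h𝒞 : ∀ c ∈ 𝒞, (∀ z, 0 ≤ c z) ∧ (c.sum fun _ v => v) = (k : ℝ) ∧
      c.support.card ≤ k)
    (hcover : ∀ B : ℤ →₀ ℝ, (∀ z, 0 ≤ B z) → (B.sum fun _ v => v) = (k : ℝ) →
      B.support.card ≤ k → EMDZ A B ≤ (k : ℝ) / 2 →
      ∃ c ∈ 𝒞, EMDZ B c ≤ (k : ℝ) / 200) :
    (Real.logb 2 ((Δ : ℝ) / k)) ^ ((9 * (k : ℝ)) / 20) / 2 ^ k ≤ (𝒞.card : ℝ) :=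
  stmt_17_general k Δ hk2 hkeven hdiv A hA 𝒞 h𝒞 hcover
end
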